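/- arXiv:2112.00983 — 12 statements merged into one kernel-verified Lean document; each statement's English description precedes it below -/
import Mathlib

section
/- If f : (X,A) → (Y,B) and g : (Y,B) → (Z,C) are maps of CW pairs, then relcat(g ∘ f) ≤ min{relcat(f), relcat(g)}. -/
open Set unitInterval

section Defs

variable {X : Type*} {Y : Type*} [TopologicalSpace X] [TopologicalSpace Y]

/-- The restriction of `f` to `V` is null-homotopic. -/
def NullhomotopicOn (f : X → Y) (V : Set X) : Prop :=
  ∃ (H : C(unitInterval × ↥V, Y)) (y : Y),
    (∀ x : ↥V, H (1, x) = f x) ∧ (∀ x : ↥V, H (0, x) = y)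

/-- The restriction of `f` to `V` is homotopic to a map with values in `A`. -/
def DeformsIntoOn (f : X → Y) (V : Set X) (A : Set Y) : Prop :=
  ∃ H : C(unitInterval × ↥V, Y),
    (∀ x : ↥V, H (1, x) = f x) ∧ (∀ x : ↥V, H (0, x) ∈ A)

/-- There is a homotopy of pairs `(V × I, (V ∩ A) × I) → (Y, B)` ending at `f|_V`
and starting at a map into `B`. -/
def RelPairDeform (f : X → Y) (V A : Set X) (B : Set Y) : Prop :=
  ∃ H : C(unitInterval × ↥V, Y),
    (∀ x : ↥V, H (1, x) = f x) ∧ (∀ x : ↥V, H (0, x) ∈ B) ∧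
    (∀ (t : unitInterval) (x : ↥V), (x : X) ∈ A → H (t, x) ∈ B)

/-- `relcat f A B ≤ n` : covering by `n+1` open sets as in the definition of the
relative category of a map of pairs `f : (X,A) → (Y,B)`. -/
def relcatLE (f : X → Y) (A : Set X) (B : Set Y) (n : ℕ) : Prop :=
  ∃ V : Fin (n + 1) → Set X, (∀ i, IsOpen (V i)) ∧ (⋃ i, V i) = Set.univ ∧
    A ⊆ V 0 ∧ (∀ i, i ≠ 0 → NullhomotopicOn f (V i)) ∧ RelPairDeform f (V 0) A B

/-- The relative category of a map of pairs `f : (X,A) → (Y,B)` (`⊤` if none exists). -/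
noncomputable def relcat (f : X → Y) (A : Set X) (B : Set Y) : ℕ∞ :=
  sInf {n : ℕ∞ | ∃ m : ℕ, n = (m : ℕ∞) ∧ relcatLE f A B m}

/-- `qscat f A ≤ n` : covering by `n+1` open sets on each of which `f` deforms into `A`. -/
def qscatLE (f : X → Y) (A : Set Y) (n : ℕ) : Prop :=
  ∃ V : Fin (n + 1) → Set X, (∀ i, IsOpen (V i)) ∧ (⋃ i, V i) = Set.univ ∧
    ∀ i, DeformsIntoOn f (V i) A

/-- The quasi-strong LS category of a map of pairs `f : (B,C) → (X,A)`. -/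
noncomputable def qscat (f : X → Y) (A : Set Y) : ℕ∞ :=
  sInf {n : ℕ∞ | ∃ m : ℕ, n = (m : ℕ∞) ∧ qscatLE f A m}

/-- The restriction of `f : (X,C) → (Y,A)` to `(V, V ∩ C)` is strongly relatively
inessential. -/
def StronglyRelInessentialOn (f : X → Y) (V C : Set X) (A : Set Y) : Prop :=
  ∃ H : C(unitInterval × ↥V, Y),
    (∀ x : ↥V, H (1, x) = f x) ∧ (∀ x : ↥V, H (0, x) ∈ A) ∧
    (∀ (t : unitInterval) (x : ↥V), (x : X) ∈ C → H (t, x) = f x)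

/-- `srelcat f C A ≤ n`. -/
def srelcatLE (f : X → Y) (C : Set X) (A : Set Y) (n : ℕ) : Prop :=
  ∃ V : Fin (n + 1) → Set X, (∀ i, IsOpen (V i)) ∧ (⋃ i, V i) = Set.univ ∧
    ∀ i, StronglyRelInessentialOn f (V i) C A

/-- The strong relative LS category of a map of pairs `f : (B,C) → (X,A)`. -/
noncomputable def srelcat (f : X → Y) (C : Set X) (A : Set Y) : ℕ∞ :=
  sInf {n : ℕ∞ | ∃ m : ℕ, n = (m : ℕ∞) ∧ srelcatLE f C A m}

/-- `catMap f ≤ n` : covering by `n+1` open sets on each of which `f` is null-homotopic. -/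
def catMapLE (f : X → Y) (n : ℕ) : Prop :=
  ∃ V : Fin (n + 1) → Set X, (∀ i, IsOpen (V i)) ∧ (⋃ i, V i) = Set.univ ∧
    ∀ i, NullhomotopicOn f (V i)

/-- The LS category of a map. -/
noncomputable def catMap (f : X → Y) : ℕ∞ :=
  sInf {n : ℕ∞ | ∃ m : ℕ, n = (m : ℕ∞) ∧ catMapLE f m}

end Defs

/-- The `n`-th (higher) topological complexity of a map `f : X → Y`:
`qscat` of the induced map of pairs `(Xⁿ, Δₙ(X)) → (Yⁿ, Δₙ(Y))`. -/
noncomputable def TCmap (n : ℕ) {X Y : Type*} [TopologicalSpace X] [TopologicalSpace Y]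
    (f : X → Y) : ℕ∞ :=
  qscat (fun x : Fin n → X => fun i => f (x i)) {y : Fin n → Y | ∀ i j, y i = y j}

lemma relcatLE_comp_left {X Y Z : Type*} [TopologicalSpace X] [TopologicalSpace Y]
    [TopologicalSpace Z] {A : Set X} {B : Set Y} {C : Set Z}
    (f : X → Y) (g : Y → Z) (hg : Continuous g) (hgBC : Set.MapsTo g B C) {m : ℕ}
    (h : relcatLE f A B m) : relcatLE (g ∘ f) A C m := by
  obtain ⟨V, hopen, hcov, hA, hnull, H, h1, h0, hp⟩ := h
  refine ⟨V, hopen, hcov, hA, ?_, ⟨ContinuousMap.mk (g ∘ H) (hg.comp H.continuous),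
    fun x => by simp [h1 x], fun x => hgBC (h0 x), fun t x hx => hgBC (hp t x hx)⟩⟩
  intro i hi
  obtain ⟨H, y, h1, h0⟩ := hnull i hi
  exact ⟨ContinuousMap.mk (g ∘ H) (hg.comp H.continuous), g y,
    fun x => by simp [h1 x], fun x => by simp [h0 x]⟩

lemma relcatLE_comp_right {X Y Z : Type*} [TopologicalSpace X] [TopologicalSpace Y]
    [TopologicalSpace Z] {A : Set X} {B : Set Y} {C : Set Z}
    (f : X → Y) (g : Y → Z) (hf : Continuous f) (hfAB : Set.MapsTo f A B) {m : ℕ}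
    (h : relcatLE g B C m) : relcatLE (g ∘ f) A C m := by
  obtain ⟨W, hopen, hcov, hB, hnull, H, h1, h0, hp⟩ := h
  refine ⟨fun i => f ⁻¹' (W i), fun i => (hopen i).preimage hf, ?_,
    fun x hx => hB (hfAB hx), ?_, ?_⟩
  · ext x
    simp only [Set.mem_iUnion, Set.mem_preimage, Set.mem_univ, iff_true]
    have : f x ∈ ⋃ i, W i := by rw [hcov]; trivial
    simpa using this
  · intro i hi
    obtain ⟨H, y, h1, h0⟩ := hnull i hi
    refine ⟨ContinuousMap.mk (fun p => H (p.1, ⟨f p.2, p.2.2⟩))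
      (H.continuous.comp (by fun_prop)), y, fun x => h1 _, fun x => h0 _⟩
  · refine ⟨ContinuousMap.mk (fun p => H (p.1, ⟨f p.2, p.2.2⟩))
      (H.continuous.comp (by fun_prop)), fun x => h1 _, fun x => h0 _,
      fun t x hx => hp t _ (hfAB hx)⟩

/-- relcat(g ∘ f) ≤ min{relcat(f), relcat(g)} for maps of CW pairs
`f : (X,A) → (Y,B)`, `g : (Y,B) → (Z,C)`. -/
theorem relcat_comp_le {X Y Z : Type*} [TopologicalSpace X] [TopologicalSpace Y]
    [TopologicalSpace Z] {A : Set X} {B : Set Y} {C : Set Z}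
    (f : X → Y) (g : Y → Z) (hf : Continuous f) (hg : Continuous g)
    (hfAB : Set.MapsTo f A B) (hgBC : Set.MapsTo g B C) :
    relcat (g ∘ f) A C ≤ min (relcat f A B) (relcat g B C) := by
  refine le_min (sInf_le_sInf ?_) (sInf_le_sInf ?_)
  · rintro n ⟨m, rfl, hm⟩
    exact ⟨m, rfl, relcatLE_comp_left f g hg hgBC hm⟩
  · rintro n ⟨m, rfl, hm⟩
    exact ⟨m, rfl, relcatLE_comp_right f g hf hfAB hm⟩
end

section
/- The relative category relcat(f) of a map of CW pairs f : (X,A) → (Y,B) is invariant under homotopy of maps of pairs: if f ≃ g as maps of pairs, then relcat(f) = relcat(g). -/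
/-!
Restricted to an open set `V`, the homotopy of pairs from `f` to `g` is a homotopy keeping
`V ∩ A` inside `B` at all times. Concatenating with its reverse turns a null-homotopy of `g|_V`
into one of `f|_V`, and a deformation of `g|_V` into `B` through maps of pairs into one of `f|_V`,
so the same cover witnesses `relcat f ≤ n` and `relcat g ≤ n`.
-/

open Set unitInterval

namespace ContinuousMap

variable {X Y : Type*} [TopologicalSpace X] [TopologicalSpace Y] {F G : C(X, Y)}

theorem Homotopic.restrict (h : F.Homotopic G) (V : Set X) :
    (F.restrict V).Homotopic (G.restrict V) :=
  h.comp (.refl ((ContinuousMap.id X).restrict V))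

theorem HomotopicWith.restrict_mapsTo {A : Set X} {B : Set Y}
    (h : F.HomotopicWith G (MapsTo · A B)) (V : Set X) :
    (F.restrict V).HomotopicWith (G.restrict V) (MapsTo · (Subtype.val ⁻¹' A) B) := by
  obtain ⟨H⟩ := h
  exact ⟨{ toHomotopy := H.toHomotopy.compContinuousMap ((ContinuousMap.id X).restrict V)
           prop' := fun t _ hx => H.prop t hx }⟩

end ContinuousMap

section RelativeCategory

variable {X Y : Type*} [TopologicalSpace X] [TopologicalSpace Y]

theorem nullhomotopicOn_iff (F : C(X, Y)) (V : Set X) :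
    NullhomotopicOn F V ↔ ∃ y, (ContinuousMap.const V y).Homotopic (F.restrict V) := by
  constructor
  · rintro ⟨K, y, hK1, hK0⟩
    exact ⟨y, ⟨⟨K, hK0, hK1⟩⟩⟩
  · rintro ⟨y, ⟨K⟩⟩
    exact ⟨K.toContinuousMap, y, K.apply_one, K.apply_zero⟩

theorem relPairDeform_iff (F : C(X, Y)) (V A : Set X) (B : Set Y) :
    RelPairDeform F V A B ↔ ∃ F₀ : C(V, Y), range F₀ ⊆ B ∧
      F₀.HomotopicWith (F.restrict V) (MapsTo · (Subtype.val ⁻¹' A) B) := by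
  constructor
  · rintro ⟨K, hK1, hK0, hKA⟩
    exact ⟨K.curry 0, range_subset_iff.2 hK0,
      ⟨{ toContinuousMap := K
         map_zero_left := fun _ => rfl
         map_one_left := hK1
         prop' := fun t x => hKA t x }⟩⟩
  · rintro ⟨F₀, hF₀, ⟨K⟩⟩
    exact ⟨K.toContinuousMap, K.apply_one, fun x => K.apply_zero x ▸ hF₀ (mem_range_self x),
      fun t _ hx => K.prop t hx⟩

variable {F G : C(X, Y)}

theorem NullhomotopicOn.of_homotopic {V : Set X} (h : NullhomotopicOn G V)
    (hFG : F.Homotopic G) : NullhomotopicOn F V := by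
  obtain ⟨y, hy⟩ := (nullhomotopicOn_iff G V).1 h
  exact (nullhomotopicOn_iff F V).2 ⟨y, hy.trans (hFG.restrict V).symm⟩

theorem RelPairDeform.of_homotopicWith {V A : Set X} {B : Set Y} (h : RelPairDeform G V A B)
    (hFG : F.HomotopicWith G (MapsTo · A B)) : RelPairDeform F V A B := by
  obtain ⟨F₀, hF₀, hK⟩ := (relPairDeform_iff G V A B).1 h
  exact (relPairDeform_iff F V A B).2 ⟨F₀, hF₀, hK.trans (hFG.restrict_mapsTo V).symm⟩

theorem relcatLE_of_homotopicWith {A : Set X} {B : Set Y} {n : ℕ} (h : relcatLE G A B n)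
    (hFG : F.HomotopicWith G (MapsTo · A B)) : relcatLE F A B n := by
  obtain ⟨V, hV, hcover, hAV, hnull, hrel⟩ := h
  exact ⟨V, hV, hcover, hAV, fun i hi => (hnull i hi).of_homotopic (hFG.map (·.toHomotopy)),
    hrel.of_homotopicWith hFG⟩

theorem relcat_eq_of_homotopicWith {A : Set X} {B : Set Y}
    (hFG : F.HomotopicWith G (MapsTo · A B)) : relcat F A B = relcat G A B := by
  have hLE : ∀ n, relcatLE F A B n ↔ relcatLE G A B n := fun _ =>
    ⟨(relcatLE_of_homotopicWith · hFG.symm), (relcatLE_of_homotopicWith · hFG)⟩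
  simp only [relcat, hLE]

end RelativeCategory

theorem relcat_homotopy_invariant_general {X Y : Type*} [TopologicalSpace X] [TopologicalSpace Y]
    {A : Set X} {B : Set Y} (f g : X → Y) (hf : Continuous f) (hg : Continuous g)
    (H : C(unitInterval × X, Y))
    (hH0 : ∀ x, H (0, x) = f x) (hH1 : ∀ x, H (1, x) = g x)
    (hHA : ∀ (t : unitInterval) (a : X), a ∈ A → H (t, a) ∈ B) :
    relcat f A B = relcat g A B := by
  exact relcat_eq_of_homotopicWith (F := ⟨f, hf⟩) (G := ⟨g, hg⟩)
    ⟨{ toContinuousMap := H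
       map_zero_left := hH0
       map_one_left := hH1
       prop' := fun t _ => hHA t _ }⟩

/-- `relcat` is invariant under homotopy of maps of pairs. -/
theorem relcat_homotopy_invariant {X Y : Type*} [TopologicalSpace X] [TopologicalSpace Y]
    {A : Set X} {B : Set Y} (f g : X → Y) (hf : Continuous f) (hg : Continuous g)
    (hfAB : Set.MapsTo f A B) (hgAB : Set.MapsTo g A B)
    (H : C(unitInterval × X, Y))
    (hH0 : ∀ x, H (0, x) = f x) (hH1 : ∀ x, H (1, x) = g x)
    (hHA : ∀ (t : unitInterval) (a : X), a ∈ A → H (t, a) ∈ B) :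
    relcat f A B = relcat g A B :=
  relcat_homotopy_invariant_general f g hf hg H hH0 hH1 hHA
end

section
/- Let f : (X,A) → (Y,B) be a map of CW pairs with X path-connected. Then f admits a relative categorical sequence of length n if and only if relcat(f) ≤ n. -/
open Set unitInterval

/-- A relative categorical sequence of length `n` for `f : (X,A) → (Y,B)`. -/
def RelCatSeq {X Y : Type*} [TopologicalSpace X] [TopologicalSpace Y]
    (f : X → Y) (A : Set X) (B : Set Y) (n : ℕ) : Prop :=
  ∃ P : Fin (n + 1) → Set X, (∀ i, IsOpen (P i)) ∧ Monotone P ∧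
    P (Fin.last n) = Set.univ ∧ A ⊆ P 0 ∧
    (∀ i : Fin n, ∃ V : Set X, IsOpen V ∧ P i.succ \ P i.castSucc ⊆ V ∧
      NullhomotopicOn f V) ∧
    RelPairDeform f (P 0) A B

/-!
A relative categorical sequence `P` yields the cover `P₀, V₁, …, Vₙ`, since every point lies in
`P₀` or in a difference `P_{i+1} \ P_i`. Conversely a cover `V₀, …, Vₘ` yields the sequence of
partial unions `Pᵢ = V₀ ∪ ⋯ ∪ Vᵢ`, which can be lengthened to any `n ≥ m` by repeating `Pₘ = X`;
the repeated steps have empty differences, on which `f` is null-homotopic as soon as `Y` is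
nonempty.
-/

lemma ENat.sInf_setOf_natCast_le_iff {p : ℕ → Prop} {n : ℕ} :
    sInf {x : ℕ∞ | ∃ m : ℕ, x = m ∧ p m} ≤ n ↔ ∃ m ≤ n, p m := by
  constructor
  · intro h
    by_contra! hp
    have hsucc_le : ((n + 1 : ℕ) : ℕ∞) ≤ sInf {x : ℕ∞ | ∃ m : ℕ, x = m ∧ p m} := by
      refine le_sInf ?_
      rintro _ ⟨m, rfl, hm⟩
      exact_mod_cast lt_of_not_ge fun hmn => hp m hmn hm
    exact absurd (hsucc_le.trans h) (by exact_mod_cast n.not_succ_le_self)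
  · rintro ⟨m, hmn, hm⟩
    have hmem : (m : ℕ∞) ∈ {x : ℕ∞ | ∃ m : ℕ, x = m ∧ p m} := ⟨m, rfl, hm⟩
    exact (sInf_le hmem).trans (by exact_mod_cast hmn)

lemma mem_zero_or_exists_mem_succ_diff {α : Type*} {n : ℕ} (P : Fin (n + 1) → Set α) {x : α}
    (k : Fin (n + 1)) (hx : x ∈ P k) : x ∈ P 0 ∨ ∃ i : Fin n, x ∈ P i.succ \ P i.castSucc := by
  induction k using Fin.induction with
  | zero => exact .inl hx
  | succ i ih =>
    by_cases hi : x ∈ P i.castSucc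
    · exact ih hi
    · exact .inr ⟨i, hx, hi⟩

section

variable {X Y : Type*} [TopologicalSpace X] [TopologicalSpace Y]

lemma nullhomotopicOn_empty [Nonempty Y] (f : X → Y) : NullhomotopicOn f ∅ :=
  ⟨ContinuousMap.const _ (Classical.arbitrary Y), _, fun x => absurd x.2 (notMem_empty _),
    fun _ => rfl⟩

lemma relcat_le_coe_iff (f : X → Y) (A : Set X) (B : Set Y) (n : ℕ) :
    relcat f A B ≤ n ↔ ∃ m ≤ n, relcatLE f A B m :=
  ENat.sInf_setOf_natCast_le_iff

lemma RelCatSeq.relcatLE {f : X → Y} {A : Set X} {B : Set Y} {n : ℕ}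
    (h : RelCatSeq f A B n) : relcatLE f A B n := by
  obtain ⟨P, hPopen, -, hPlast, hAP, hdiff, hdeform⟩ := h
  choose V hVopen hVdiff hVnull using hdiff
  refine ⟨Fin.cases (P 0) V, Fin.cases (hPopen 0) hVopen, ?_, ?_, Fin.cases (by simp) ?_, ?_⟩
  · refine eq_univ_of_forall fun x => mem_iUnion.2 ?_
    rcases mem_zero_or_exists_mem_succ_diff P (Fin.last n) (hPlast ▸ mem_univ x) with
      hx | ⟨i, hx⟩
    · exact ⟨0, hx⟩
    · exact ⟨i.succ, hVdiff i hx⟩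
  · exact hAP
  · exact hdeform
  · exact fun i _ => hVnull i

lemma relcatLE.relCatSeq {f : X → Y} {A : Set X} {B : Set Y} {n : ℕ}
    (h : relcatLE f A B n) : RelCatSeq f A B n := by
  obtain ⟨V, hVopen, hVcover, hAV, hVnull, hdeform⟩ := h
  have hP0 : ⋃ j ≤ (0 : Fin (n + 1)), V j = V 0 := by simp
  refine ⟨fun i => ⋃ j ≤ i, V j, fun i => isOpen_biUnion fun j _ => hVopen j,
    fun i i' hii' => biUnion_mono (fun j hj => le_trans hj hii') fun _ _ => le_rfl, ?_, ?_,
    fun i => ⟨V i.succ, hVopen _, ?_, hVnull _ (Fin.succ_ne_zero i)⟩, ?_⟩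
  · refine eq_univ_of_forall fun x => ?_
    obtain ⟨j, hxj⟩ := mem_iUnion.1 (hVcover ▸ mem_univ x)
    exact mem_iUnion₂.2 ⟨j, Fin.le_last j, hxj⟩
  · simpa only [hP0] using hAV
  · rintro x ⟨hx, hx'⟩
    obtain ⟨j, hj, hxj⟩ := mem_iUnion₂.1 hx
    have hji : ¬ j < i.succ := fun hlt => hx' (mem_biUnion (Fin.le_castSucc_iff.2 hlt) hxj)
    exact le_antisymm hj (not_lt.1 hji) ▸ hxj
  · simpa only [hP0] using hdeform

lemma RelCatSeq.mono [Nonempty Y] {f : X → Y} {A : Set X} {B : Set Y} {m n : ℕ}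
    (h : RelCatSeq f A B m) (hmn : m ≤ n) : RelCatSeq f A B n := by
  obtain ⟨P, hPopen, hPmono, hPlast, hAP, hdiff, hdeform⟩ := h
  have hclamp0 : Fin.clamp ((0 : Fin (n + 1)) : ℕ) m = 0 := by simp [Fin.clamp]
  have hclampLast : Fin.clamp (Fin.last n : ℕ) m = Fin.last m := by
    simp [Fin.clamp, Fin.ext_iff, hmn]
  have hdiff' : ∀ i : Fin n, ∃ V : Set X, IsOpen V ∧
      P (Fin.clamp i.succ m) \ P (Fin.clamp i.castSucc m) ⊆ V ∧ NullhomotopicOn f V := by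
    intro i
    by_cases him : (i : ℕ) < m
    · have hsucc : Fin.clamp i.succ m = (⟨i, him⟩ : Fin m).succ := Fin.ext (min_eq_left him)
      have hcast : Fin.clamp i.castSucc m = (⟨i, him⟩ : Fin m).castSucc :=
        Fin.ext (min_eq_left him.le)
      rw [hsucc, hcast]
      exact hdiff _
    · have hsame : Fin.clamp i.succ m = Fin.clamp i.castSucc m :=
        Fin.ext ((min_eq_right (by rw [Fin.val_succ]; omega)).trans
          (min_eq_right (by rw [Fin.val_castSucc]; omega)).symm)
      exact ⟨∅, isOpen_empty, by rw [hsame, sdiff_self], nullhomotopicOn_empty f⟩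
  refine ⟨fun i => P (Fin.clamp i m), fun i => hPopen _,
    hPmono.comp fun i i' hii' => min_le_min_right m hii', ?_, ?_, hdiff', ?_⟩
  · simp only [hclampLast, hPlast]
  · simpa only [hclamp0] using hAP
  · simpa only [hclamp0] using hdeform

end

theorem relCatSeq_iff_relcat_le_general {X Y : Type*} [TopologicalSpace X] [TopologicalSpace Y]
    [PathConnectedSpace X] {A : Set X} {B : Set Y}
    (f : X → Y) (n : ℕ) :
    RelCatSeq f A B n ↔ relcat f A B ≤ (n : ℕ∞) := by
  rw [relcat_le_coe_iff]
  refine ⟨fun h => ⟨n, le_rfl, h.relcatLE⟩, fun ⟨m, hmn, hm⟩ => ?_⟩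
  have : Nonempty Y := ⟨f (Classical.arbitrary X)⟩
  exact hm.relCatSeq.mono hmn

/-- for `f : (X,A) → (Y,B)` with `X` path-connected, `f` has a relative
categorical sequence of length `n` iff `relcat f ≤ n`. -/
theorem relCatSeq_iff_relcat_le {X Y : Type*} [TopologicalSpace X] [TopologicalSpace Y]
    [PathConnectedSpace X] {A : Set X} {B : Set Y}
    (f : X → Y) (hf : Continuous f) (hfAB : Set.MapsTo f A B) (n : ℕ) :
    RelCatSeq f A B n ↔ relcat f A B ≤ (n : ℕ∞) :=
  relCatSeq_iff_relcat_le_general f n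
end

section
/- For any CW pair (X,A), one has cat(X,A) ≤ cat(X − A) + 1. -/
open Set unitInterval

/- The CW pair is modelled by a closed `A` with an open neighbourhood `V` deformation retracting
onto `A` rel `A`. Take `V` as `V₀`, and for the other sets a categorical cover of the open
subspace `X − A`: its members stay open in `X` since `A` is closed, and a null-homotopy in `X − A`
is one in `X` after composing with the inclusion. -/

section NullhomotopicOn

variable {X Y Z : Type*} [TopologicalSpace X] [TopologicalSpace Y] [TopologicalSpace Z]

theorem NullhomotopicOn.comp_continuous {f : X → Y} {V : Set X} (hf : NullhomotopicOn f V)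
    {g : Y → Z} (hg : Continuous g) : NullhomotopicOn (g ∘ f) V := by
  obtain ⟨H, y, h1, h0⟩ := hf
  exact ⟨(⟨g, hg⟩ : C(Y, Z)).comp H, g y, fun x => by simp [h1], fun x => by simp [h0]⟩

theorem NullhomotopicOn.of_comp_subtype_val {S : Set X} {f : X → Y} {W : Set S}
    (hf : NullhomotopicOn (f ∘ Subtype.val) W) : NullhomotopicOn f (Subtype.val '' W) := by
  obtain ⟨H, y, h1, h0⟩ := hf
  have hS : ∀ x : ↥(Subtype.val '' W), (x : X) ∈ S := by
    rintro ⟨_, a, -, rfl⟩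
    exact a.2
  have hW : ∀ x : ↥(Subtype.val '' W), (⟨x, hS x⟩ : S) ∈ W := by
    rintro ⟨_, a, ha, rfl⟩
    exact ha
  let g : C(↥(Subtype.val '' W), W) :=
    ⟨fun x => ⟨⟨x, hS x⟩, hW x⟩, (continuous_subtype_val.subtype_mk hS).subtype_mk hW⟩
  exact ⟨H.comp ((ContinuousMap.id I).prodMap g), y, fun x => h1 (g x), fun x => h0 (g x)⟩

theorem NullhomotopicOn.image_subtype_val {S : Set X} {W : Set S}
    (hW : NullhomotopicOn (id : S → S) W) : NullhomotopicOn (id : X → X) (Subtype.val '' W) :=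
  (hW.comp_continuous continuous_subtype_val).of_comp_subtype_val

end NullhomotopicOn

theorem ENat.sInf_setOf_natCast_le_add_one {P Q : ℕ → Prop} (h : ∀ m, Q m → P (m + 1)) :
    sInf {n : ℕ∞ | ∃ m : ℕ, n = m ∧ P m} ≤ sInf {n : ℕ∞ | ∃ m : ℕ, n = m ∧ Q m} + 1 := by
  rcases Set.eq_empty_or_nonempty {n : ℕ∞ | ∃ m : ℕ, n = m ∧ Q m} with hQ | hQ
  · simp [hQ]
  obtain ⟨m, hm, hQm⟩ := csInf_mem hQ
  rw [hm]
  exact sInf_le ⟨m + 1, by push_cast; rfl, h m hQm⟩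

theorem relcatLE_succ_of_catMapLE_compl {X : Type*} [TopologicalSpace X] {A V : Set X}
    (hA : IsClosed A) (hV : IsOpen V) (hAV : A ⊆ V) (hdef : RelPairDeform (id : X → X) V A A)
    {m : ℕ} (hm : catMapLE (id : ↥(Aᶜ) → ↥(Aᶜ)) m) : relcatLE (id : X → X) A A (m + 1) := by
  obtain ⟨W, hWo, hWcover, hWnull⟩ := hm
  refine ⟨Fin.cases V fun i => Subtype.val '' W i, ?_, ?_, ?_, ?_, ?_⟩
  · refine Fin.cases hV fun i => ?_
    exact hA.isOpen_compl.isOpenMap_subtype_val _ (hWo i)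
  · refine Set.eq_univ_of_forall fun x => ?_
    by_cases hx : x ∈ A
    · exact Set.mem_iUnion.2 ⟨0, hAV hx⟩
    · obtain ⟨i, hi⟩ := Set.mem_iUnion.1 (hWcover.symm ▸ Set.mem_univ (⟨x, hx⟩ : ↥(Aᶜ)))
      exact Set.mem_iUnion.2 ⟨i.succ, ⟨x, hx⟩, hi, rfl⟩
  · exact hAV
  · intro i hi
    induction i using Fin.cases with
    | zero => exact absurd rfl hi
    | succ i => exact (hWnull i).image_subtype_val
  · exact hdef

/-- for a CW pair `(X,A)` (encoded by `A` being closed and having an open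
neighborhood which deformation retracts onto `A` rel `A`), one has
`cat(X,A) ≤ cat(X − A) + 1`, where `cat(X,A) = relcat(id : (X,A) → (X,A))` and
`cat(X − A)` is the ordinary LS category of the subspace `X − A`. -/
theorem cat_pair_le_cat_compl_add_one {X : Type*} [TopologicalSpace X] {A : Set X}
    (hAcl : IsClosed A)
    (hNDR : ∃ V : Set X, IsOpen V ∧ A ⊆ V ∧
      ∃ H : C(unitInterval × ↥V, X),
        (∀ x : ↥V, H (1, x) = (x : X)) ∧ (∀ x : ↥V, H (0, x) ∈ A) ∧
        (∀ (t : unitInterval) (x : ↥V), (x : X) ∈ A → H (t, x) = (x : X))) :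
    relcat (id : X → X) A A ≤ catMap (id : ↥(Aᶜ) → ↥(Aᶜ)) + 1 := by
  obtain ⟨V, hV, hAV, H, h1, h0, hrel⟩ := hNDR
  have hdef : RelPairDeform (id : X → X) V A A :=
    ⟨H, h1, h0, fun t x hx => (hrel t x hx).symm ▸ hx⟩
  exact ENat.sInf_setOf_natCast_le_add_one fun m hm =>
    relcatLE_succ_of_catMapLE_compl hAcl hV hAV hdef hm
end

section
/- Let f_i : (B_i, C_i) → (X_i, A_i), i = 1,2, be maps of CW pairs such that B₁ × B₂ is normal. Then qscat(f₁ × f₂) ≤ qscat(f₁) + qscat(f₂), where f₁ × f₂ : (B₁ × B₂, C₁ × C₂) → (X₁ × X₂, A₁ × A₂). -/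
open Set unitInterval

section ProdAux

open Set

variable {X Y : Type*} [TopologicalSpace X] [TopologicalSpace Y]

lemma qscat_le_of_qscatLE {f : X → Y} {A : Set Y} {m : ℕ} (h : qscatLE f A m) :
    qscat f A ≤ (m : ℕ∞) :=
  sInf_le ⟨m, rfl, h⟩

lemma exists_qscatLE_of_ne_top {f : X → Y} {A : Set Y} (h : qscat f A ≠ ⊤) :
    ∃ m : ℕ, qscatLE f A m ∧ (m : ℕ∞) ≤ qscat f A := by
  classical
  by_cases hne : ∃ m : ℕ, qscatLE f A m
  · refine ⟨Nat.find hne, Nat.find_spec hne, le_sInf ?_⟩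
    rintro n ⟨m', rfl, hm'⟩
    exact Nat.cast_le.mpr (Nat.find_min' hne hm')
  · exfalso
    apply h
    have he : {n : ℕ∞ | ∃ m : ℕ, n = (m : ℕ∞) ∧ qscatLE f A m} = ∅ := by
      ext n
      simp only [mem_setOf_eq, mem_empty_iff_false, iff_false, not_exists]
      intro m hm
      exact hne ⟨m, hm.2⟩
    rw [qscat, he, sInf_empty]

lemma exists_bumps {B : Type*} [TopologicalSpace B] [NormalSpace B] {n : ℕ}
    (U : Fin (n + 1) → Set B) (hUo : ∀ i, IsOpen (U i)) (hUc : (⋃ i, U i) = univ) :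
    ∃ f : Fin (n + 1) → C(B, ℝ), (∀ i x, 0 ≤ f i x) ∧ (∀ i x, 0 < f i x → x ∈ U i) ∧
      (∀ x, ∃ i, 0 < f i x) := by
  obtain ⟨v, hv_cov, hv_open, hv_cl⟩ :=
    exists_subset_iUnion_closure_subset isClosed_univ hUo (fun x _ => Set.toFinite _) hUc.ge
  have key : ∀ i, ∃ g : C(B, ℝ), EqOn g 0 (U i)ᶜ ∧ EqOn g 1 (closure (v i)) ∧
      ∀ x, g x ∈ Icc (0 : ℝ) 1 := fun i =>
    exists_continuous_zero_one_of_isClosed (hUo i).isClosed_compl isClosed_closure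
      (disjoint_compl_left.mono_right (hv_cl i))
  choose g hg0 hg1 hg01 using key
  refine ⟨g, fun i x => (hg01 i x).1, fun i x hx => ?_, fun x => ?_⟩
  · by_contra hxU
    have h0 : g i x = 0 := by simpa using hg0 i hxU
    rw [h0] at hx
    exact lt_irrefl 0 hx
  · have hx := hv_cov (mem_univ x)
    rw [mem_iUnion] at hx
    obtain ⟨i, hi⟩ := hx
    have h1 : g i x = 1 := by simpa using hg1 i (subset_closure hi)
    exact ⟨i, by rw [h1]; norm_num⟩

lemma qscatLE_prod {B₁ B₂ X₁ X₂ : Type*} [TopologicalSpace B₁] [TopologicalSpace B₂]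
    [TopologicalSpace X₁] [TopologicalSpace X₂] [NormalSpace (B₁ × B₂)]
    {A₁ : Set X₁} {A₂ : Set X₂} {f₁ : B₁ → X₁} {f₂ : B₂ → X₂} {m₁ m₂ : ℕ}
    (H₁ : qscatLE f₁ A₁ m₁) (H₂ : qscatLE f₂ A₂ m₂) :
    qscatLE (Prod.map f₁ f₂) (A₁ ×ˢ A₂) (m₁ + m₂) := by
  classical
  by_cases hE : IsEmpty (B₁ × B₂)
  · refine ⟨fun _ => univ, fun _ => isOpen_univ, Set.iUnion_const _, fun i => ?_⟩
    haveI : IsEmpty ↥(univ : Set (B₁ × B₂)) := ⟨fun x => hE.false x.1⟩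
    exact ⟨⟨fun q => isEmptyElim q.2, continuous_iff_continuousAt.mpr fun q => isEmptyElim q.2⟩,
      fun x => isEmptyElim x, fun x => isEmptyElim x⟩
  rw [not_isEmpty_iff] at hE
  obtain ⟨b₁, b₂⟩ := hE.some
  haveI hN₁ : NormalSpace B₁ := by
    refine ⟨fun s t hs ht hd => ?_⟩
    obtain ⟨o₁, o₂, ho₁, ho₂, hso, hto, hoo⟩ :=
      NormalSpace.normal (s ×ˢ (univ : Set B₂)) (t ×ˢ (univ : Set B₂))
        (hs.prod isClosed_univ) (ht.prod isClosed_univ) (by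
          rw [Set.disjoint_left] at hd ⊢
          rintro ⟨x, y⟩ ⟨hxs, -⟩ ⟨hxt, -⟩
          exact hd hxs hxt)
    exact ⟨(fun x => (x, b₂)) ⁻¹' o₁, (fun x => (x, b₂)) ⁻¹' o₂,
      ho₁.preimage (continuous_id.prodMk continuous_const),
      ho₂.preimage (continuous_id.prodMk continuous_const),
      fun x hx => hso ⟨hx, mem_univ _⟩, fun x hx => hto ⟨hx, mem_univ _⟩,
      hoo.preimage _⟩
  haveI hN₂ : NormalSpace B₂ := by
    refine ⟨fun s t hs ht hd => ?_⟩
    obtain ⟨o₁, o₂, ho₁, ho₂, hso, hto, hoo⟩ :=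
      NormalSpace.normal ((univ : Set B₁) ×ˢ s) ((univ : Set B₁) ×ˢ t)
        (isClosed_univ.prod hs) (isClosed_univ.prod ht) (by
          rw [Set.disjoint_left] at hd ⊢
          rintro ⟨x, y⟩ ⟨-, hys⟩ ⟨-, hyt⟩
          exact hd hys hyt)
    exact ⟨(fun y => (b₁, y)) ⁻¹' o₁, (fun y => (b₁, y)) ⁻¹' o₂,
      ho₁.preimage (continuous_const.prodMk continuous_id),
      ho₂.preimage (continuous_const.prodMk continuous_id),
      fun y hy => hso ⟨mem_univ _, hy⟩, fun y hy => hto ⟨mem_univ _, hy⟩,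
      hoo.preimage _⟩
  obtain ⟨U, hUo, hUc, hUd⟩ := H₁
  obtain ⟨V, hVo, hVc, hVd⟩ := H₂
  obtain ⟨f, hf0, hfU, hfpos⟩ := exists_bumps U hUo hUc
  obtain ⟨g, hg0, hgV, hgpos⟩ := exists_bumps V hVo hVc
  choose K₁ hK₁e hK₁s using hUd
  choose K₂ hK₂e hK₂s using hVd
  set W : Finset (Fin (m₁ + 1)) → Finset (Fin (m₂ + 1)) → Set (B₁ × B₂) := fun S T =>
    {z | ∀ i ∈ S, ∀ j ∈ T, 0 < f i z.1 * g j z.2 ∧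
      ∀ k l, (k ∉ S ∨ l ∉ T) → f k z.1 * g l z.2 < f i z.1 * g j z.2} with hW
  have hWmem : ∀ S T (z : B₁ × B₂), z ∈ W S T ↔ ∀ i ∈ S, ∀ j ∈ T,
      0 < f i z.1 * g j z.2 ∧
      ∀ k l, (k ∉ S ∨ l ∉ T) → f k z.1 * g l z.2 < f i z.1 * g j z.2 := by
    intro S T z
    rw [hW]
    exact Iff.rfl
  have hWopen : ∀ S T, IsOpen (W S T) := by
    intro S T
    have hrw : W S T = ⋂ i ∈ S, ⋂ j ∈ T,
        ({z : B₁ × B₂ | 0 < f i z.1 * g j z.2} ∩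
          ⋂ k, ⋂ l, {z : B₁ × B₂ | (k ∉ S ∨ l ∉ T) → f k z.1 * g l z.2 < f i z.1 * g j z.2}) := by
      ext z
      simp only [hWmem, mem_iInter, mem_inter_iff, mem_setOf_eq]
    rw [hrw]
    refine isOpen_biInter_finset fun i _ => isOpen_biInter_finset fun j _ => ?_
    refine IsOpen.inter ?_ (isOpen_iInter_of_finite fun k => isOpen_iInter_of_finite fun l => ?_)
    · exact isOpen_lt continuous_const
        (((f i).continuous.comp continuous_fst).mul ((g j).continuous.comp continuous_snd))
    · by_cases hkl : k ∉ S ∨ l ∉ T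
      · have he : {z : B₁ × B₂ | (k ∉ S ∨ l ∉ T) → f k z.1 * g l z.2 < f i z.1 * g j z.2}
            = {z : B₁ × B₂ | f k z.1 * g l z.2 < f i z.1 * g j z.2} := by
          ext z; simp [hkl]
        rw [he]
        exact isOpen_lt (((f k).continuous.comp continuous_fst).mul
          ((g l).continuous.comp continuous_snd))
          (((f i).continuous.comp continuous_fst).mul ((g j).continuous.comp continuous_snd))
      · have he : {z : B₁ × B₂ | (k ∉ S ∨ l ∉ T) → f k z.1 * g l z.2 < f i z.1 * g j z.2}
            = univ := by
          ext z
          simp only [mem_setOf_eq, mem_univ, iff_true]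
          intro hc
          exact absurd hc hkl
        rw [he]
        exact isOpen_univ
  have hWcov : ∀ z : B₁ × B₂, ∃ S : Finset (Fin (m₁ + 1)), ∃ T : Finset (Fin (m₂ + 1)),
      S.Nonempty ∧ T.Nonempty ∧ S.card + T.card ≤ m₁ + m₂ + 2 ∧ z ∈ W S T := by
    intro z
    obtain ⟨i₀, hi₀⟩ := Finite.exists_max fun i => f i z.1
    obtain ⟨j₀, hj₀⟩ := Finite.exists_max fun j => g j z.2
    obtain ⟨ip, hip⟩ := hfpos z.1
    obtain ⟨jp, hjp⟩ := hgpos z.2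
    have hMf : 0 < f i₀ z.1 := lt_of_lt_of_le hip (hi₀ ip)
    have hMg : 0 < g j₀ z.2 := lt_of_lt_of_le hjp (hj₀ jp)
    refine ⟨Finset.univ.filter (fun i => f i z.1 = f i₀ z.1),
      Finset.univ.filter (fun j => g j z.2 = g j₀ z.2), ⟨i₀, by simp⟩, ⟨j₀, by simp⟩, ?_, ?_⟩
    · have h1 := Finset.card_filter_le (Finset.univ : Finset (Fin (m₁ + 1)))
        (fun i => f i z.1 = f i₀ z.1)
      have h2 := Finset.card_filter_le (Finset.univ : Finset (Fin (m₂ + 1)))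
        (fun j => g j z.2 = g j₀ z.2)
      simp only [Finset.card_univ, Fintype.card_fin] at h1 h2
      omega
    · rw [hWmem]
      intro i hi j hj
      simp only [Finset.mem_filter, Finset.mem_univ, true_and] at hi hj
      constructor
      · rw [hi, hj]; exact mul_pos hMf hMg
      · intro k l hkl
        rw [hi, hj]
        rcases hkl with hk | hl
        · simp only [Finset.mem_filter, Finset.mem_univ, true_and] at hk
          have hklt : f k z.1 < f i₀ z.1 := lt_of_le_of_ne (hi₀ k) hk
          calc f k z.1 * g l z.2 ≤ f k z.1 * g j₀ z.2 :=
                mul_le_mul_of_nonneg_left (hj₀ l) (hf0 k z.1)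
            _ < f i₀ z.1 * g j₀ z.2 := mul_lt_mul_of_pos_right hklt hMg
        · simp only [Finset.mem_filter, Finset.mem_univ, true_and] at hl
          have hllt : g l z.2 < g j₀ z.2 := lt_of_le_of_ne (hj₀ l) hl
          calc f k z.1 * g l z.2 ≤ f i₀ z.1 * g l z.2 :=
                mul_le_mul_of_nonneg_right (hi₀ k) (hg0 l z.2)
            _ < f i₀ z.1 * g j₀ z.2 := mul_lt_mul_of_pos_left hllt hMf
  have hkey : ∀ (S S' : Finset (Fin (m₁ + 1))) (T T' : Finset (Fin (m₂ + 1))),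
      S.Nonempty → T.Nonempty → S.card + T.card = S'.card + T'.card →
      ¬(S = S' ∧ T = T') → ∃ i ∈ S, ∃ j ∈ T, i ∉ S' ∨ j ∉ T' := by
    intro S S' T T' hS hT hcard hne
    by_contra hcon
    push_neg at hcon
    obtain ⟨iS, hiS⟩ := hS
    obtain ⟨jT, hjT⟩ := hT
    have hSS : S ⊆ S' := fun i hi => (hcon i hi jT hjT).1
    have hTT : T ⊆ T' := fun j hj => (hcon iS hiS j hj).2
    have h1 := Finset.card_le_card hSS
    have h2 := Finset.card_le_card hTT
    exact hne ⟨Finset.eq_of_subset_of_card_le hSS (by omega),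
      Finset.eq_of_subset_of_card_le hTT (by omega)⟩
  have hWdisj : ∀ (S S' : Finset (Fin (m₁ + 1))) (T T' : Finset (Fin (m₂ + 1))),
      S.Nonempty → T.Nonempty → S'.Nonempty → T'.Nonempty →
      S.card + T.card = S'.card + T'.card → ¬(S = S' ∧ T = T') →
      ∀ z, z ∈ W S T → z ∈ W S' T' → False := by
    intro S S' T T' hS hT hS' hT' hcard hne z hz hz'
    rw [hWmem] at hz hz'
    obtain ⟨i, hi, j, hj, hij⟩ := hkey S S' T T' hS hT hcard hne
    obtain ⟨i', hi', j', hj', hij'⟩ := hkey S' S T' T hS' hT' hcard.symm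
      (fun hh => hne ⟨hh.1.symm, hh.2.symm⟩)
    have h1 := (hz i hi j hj).2 i' j' hij'
    have h2 := (hz' i' hi' j' hj').2 i j hij
    exact lt_asymm h1 h2
  have hdef : ∀ s : Fin (m₁ + m₂ + 1), DeformsIntoOn (Prod.map f₁ f₂)
      (⋃ (S : Finset (Fin (m₁ + 1))) (T : Finset (Fin (m₂ + 1)))
        (_ : S.Nonempty ∧ T.Nonempty ∧ S.card + T.card = (s : ℕ) + 2), W S T) (A₁ ×ˢ A₂) := by
    intro s
    set Ωs : Set (B₁ × B₂) := ⋃ (S : Finset (Fin (m₁ + 1))) (T : Finset (Fin (m₂ + 1)))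
      (_ : S.Nonempty ∧ T.Nonempty ∧ S.card + T.card = (s : ℕ) + 2), W S T with hΩ
    let ι := {p : Finset (Fin (m₁ + 1)) × Finset (Fin (m₂ + 1)) //
      p.1.Nonempty ∧ p.2.Nonempty ∧ p.1.card + p.2.card = (s : ℕ) + 2}
    have hmemΩ : ∀ z : B₁ × B₂, z ∈ Ωs → ∃ p : ι, z ∈ W p.1.1 p.1.2 := by
      intro z hz
      rw [hΩ] at hz
      simp only [mem_iUnion] at hz
      obtain ⟨S, T, hp, hzW⟩ := hz
      exact ⟨⟨(S, T), hp⟩, hzW⟩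
    let SS : ι → Set (unitInterval × ↥Ωs) := fun p => {q | (q.2 : B₁ × B₂) ∈ W p.1.1 p.1.2}
    have hSSopen : ∀ p, IsOpen (SS p) := fun p =>
      ((hWopen p.1.1 p.1.2).preimage continuous_subtype_val).preimage continuous_snd
    let iP : ι → Fin (m₁ + 1) := fun p => p.2.1.choose
    let jP : ι → Fin (m₂ + 1) := fun p => p.2.2.1.choose
    have hmemU : ∀ (p : ι) (z : B₁ × B₂), z ∈ W p.1.1 p.1.2 → z.1 ∈ U (iP p) := by
      intro p z hz
      have h := ((hWmem _ _ z).mp hz) (iP p) p.2.1.choose_spec (jP p) p.2.2.1.choose_spec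
      have hpos : 0 < f (iP p) z.1 := by
        rcases mul_pos_iff.mp h.1 with ⟨h1, _⟩ | ⟨_, h2⟩
        · exact h1
        · exact absurd h2 (not_lt.mpr (hg0 _ _))
      exact hfU _ _ hpos
    have hmemV : ∀ (p : ι) (z : B₁ × B₂), z ∈ W p.1.1 p.1.2 → z.2 ∈ V (jP p) := by
      intro p z hz
      have h := ((hWmem _ _ z).mp hz) (iP p) p.2.1.choose_spec (jP p) p.2.2.1.choose_spec
      have hpos : 0 < g (jP p) z.2 := by
        rcases mul_pos_iff.mp h.1 with ⟨_, h1⟩ | ⟨h2, _⟩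
        · exact h1
        · exact absurd h2 (not_lt.mpr (hf0 _ _))
      exact hgV _ _ hpos
    let φ : ∀ p : ι, C(↥(SS p), X₁ × X₂) := fun p =>
      ⟨fun q => (K₁ (iP p) (q.1.1, ⟨(q.1.2 : B₁ × B₂).1, hmemU p _ q.2⟩),
                 K₂ (jP p) (q.1.1, ⟨(q.1.2 : B₁ × B₂).2, hmemV p _ q.2⟩)), by
        have c0 : Continuous fun q : ↥(SS p) => q.1.1 :=
          continuous_fst.comp continuous_subtype_val
        have cz : Continuous fun q : ↥(SS p) => (q.1.2 : B₁ × B₂) :=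
          continuous_subtype_val.comp (continuous_snd.comp continuous_subtype_val)
        refine Continuous.prodMk ?_ ?_
        · exact (K₁ (iP p)).continuous.comp (c0.prodMk (cz.fst.subtype_mk _))
        · exact (K₂ (jP p)).continuous.comp (c0.prodMk (cz.snd.subtype_mk _))⟩
    have hφcomp : ∀ (p p' : ι) (q : unitInterval × ↥Ωs) (hp : q ∈ SS p) (hp' : q ∈ SS p'),
        φ p ⟨q, hp⟩ = φ p' ⟨q, hp'⟩ := by
      intro p p' q hp hp'
      have hpp : p = p' := by
        by_contra hne
        refine hWdisj p.1.1 p'.1.1 p.1.2 p'.1.2 p.2.1 p.2.2.1 p'.2.1 p'.2.2.1 ?_ ?_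
          ((q.2 : B₁ × B₂)) hp hp'
        · rw [p.2.2.2, p'.2.2.2]
        · intro hh
          exact hne (Subtype.ext (Prod.ext hh.1 hh.2))
      subst hpp
      rfl
    have hSnhds : ∀ q : unitInterval × ↥Ωs, ∃ p : ι, SS p ∈ nhds q := by
      intro q
      obtain ⟨p, hp⟩ := hmemΩ _ q.2.2
      exact ⟨p, (hSSopen p).mem_nhds hp⟩
    refine ⟨ContinuousMap.liftCover SS φ hφcomp hSnhds, ?_, ?_⟩
    · intro x
      obtain ⟨p, hp⟩ := hmemΩ _ x.2
      have hmem : ((1 : unitInterval), x) ∈ SS p := hp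
      have h1 : (ContinuousMap.liftCover SS φ hφcomp hSnhds) ((1 : unitInterval), x)
          = φ p ⟨((1 : unitInterval), x), hmem⟩ :=
        ContinuousMap.liftCover_coe (⟨((1 : unitInterval), x), hmem⟩ : ↥(SS p))
      refine h1.trans ?_
      have e1 := hK₁e (iP p) ⟨(x : B₁ × B₂).1, hmemU p _ hp⟩
      have e2 := hK₂e (jP p) ⟨(x : B₁ × B₂).2, hmemV p _ hp⟩
      exact Prod.ext e1 e2
    · intro x
      obtain ⟨p, hp⟩ := hmemΩ _ x.2
      have hmem : ((0 : unitInterval), x) ∈ SS p := hp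
      have h1 : (ContinuousMap.liftCover SS φ hφcomp hSnhds) ((0 : unitInterval), x)
          = φ p ⟨((0 : unitInterval), x), hmem⟩ :=
        ContinuousMap.liftCover_coe (⟨((0 : unitInterval), x), hmem⟩ : ↥(SS p))
      rw [h1]
      exact ⟨hK₁s (iP p) _, hK₂s (jP p) _⟩
  refine ⟨fun s => ⋃ (S : Finset (Fin (m₁ + 1))) (T : Finset (Fin (m₂ + 1)))
      (_ : S.Nonempty ∧ T.Nonempty ∧ S.card + T.card = (s : ℕ) + 2), W S T,
    fun s => isOpen_iUnion fun S => isOpen_iUnion fun T => isOpen_iUnion fun _ => hWopen S T,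
    ?_, hdef⟩
  rw [eq_univ_iff_forall]
  intro z
  simp only [mem_iUnion]
  obtain ⟨S, T, hS, hT, hle, hmem⟩ := hWcov z
  have h2 : 2 ≤ S.card + T.card := by
    have := hS.card_pos
    have := hT.card_pos
    omega
  exact ⟨⟨S.card + T.card - 2, by omega⟩, S, T,
    ⟨hS, hT, show S.card + T.card = S.card + T.card - 2 + 2 by omega⟩, hmem⟩

end ProdAux

/-- product inequality for `qscat`:
`qscat (f₁ × f₂) ≤ qscat f₁ + qscat f₂` for maps of pairs
`fᵢ : (Bᵢ,Cᵢ) → (Xᵢ,Aᵢ)` with `B₁ × B₂` normal. -/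
theorem qscat_prod_le {B₁ B₂ X₁ X₂ : Type*} [TopologicalSpace B₁] [TopologicalSpace B₂]
    [TopologicalSpace X₁] [TopologicalSpace X₂] [NormalSpace (B₁ × B₂)]
    {C₁ : Set B₁} {C₂ : Set B₂} {A₁ : Set X₁} {A₂ : Set X₂}
    (f₁ : B₁ → X₁) (f₂ : B₂ → X₂) (hf₁ : Continuous f₁) (hf₂ : Continuous f₂)
    (h₁ : Set.MapsTo f₁ C₁ A₁) (h₂ : Set.MapsTo f₂ C₂ A₂) :
    qscat (Prod.map f₁ f₂) (A₁ ×ˢ A₂) ≤ qscat f₁ A₁ + qscat f₂ A₂ := by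
  rcases eq_or_ne (qscat f₁ A₁) ⊤ with h | h
  · rw [h, top_add]; exact le_top
  rcases eq_or_ne (qscat f₂ A₂) ⊤ with h' | h'
  · rw [h', add_top]; exact le_top
  obtain ⟨m₁, hm₁, hle₁⟩ := exists_qscatLE_of_ne_top h
  obtain ⟨m₂, hm₂, hle₂⟩ := exists_qscatLE_of_ne_top h'
  refine (qscat_le_of_qscatLE (qscatLE_prod hm₁ hm₂)).trans ?_
  rw [Nat.cast_add]
  exact add_le_add hle₁ hle₂
end

section
/- The strong relative category srelcat(f) is a relative homotopy invariant: if f, g : (B,C) → (X,A) are homotopic relative to C, then srelcat(f) = srelcat(g). -/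
open Set unitInterval

lemma sri_transfer {B X : Type*} [TopologicalSpace B] [TopologicalSpace X]
    {C : Set B} {A : Set X} (f g : B → X) (hf : Continuous f) (hg : Continuous g)
    (H : C(unitInterval × B, X))
    (hH0 : ∀ x, H (0, x) = f x) (hH1 : ∀ x, H (1, x) = g x)
    (hHrel : ∀ (t : unitInterval) (c : B), c ∈ C → H (t, c) = f c)
    {V : Set B} (h : StronglyRelInessentialOn f V C A) :
    StronglyRelInessentialOn g V C A := by
  obtain ⟨G, hG1, hG0, hGrel⟩ := h
  have hfg : ∀ c ∈ C, f c = g c := fun c hc => by rw [← hHrel 1 c hc, hH1]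
  let G0 : C(↥V, X) := ⟨fun x => G (0, x), G.continuous.comp (by fun_prop)⟩
  let fV : C(↥V, X) := ⟨fun x => f x, hf.comp continuous_subtype_val⟩
  let gV : C(↥V, X) := ⟨fun x => g x, hg.comp continuous_subtype_val⟩
  let G' : ContinuousMap.Homotopy G0 fV :=
    { toContinuousMap := G
      map_zero_left := fun x => rfl
      map_one_left := fun x => hG1 x }
  let H' : ContinuousMap.Homotopy fV gV :=
    { toFun := fun p => H (p.1, (p.2 : B))
      continuous_toFun := H.continuous.comp (by fun_prop)
      map_zero_left := fun x => hH0 x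
      map_one_left := fun x => hH1 x }
  let K := G'.trans H'
  refine ⟨K.toContinuousMap, fun x => K.apply_one x,
    fun x => by rw [show K.toContinuousMap (0, x) = G0 x from K.apply_zero x]; exact hG0 x, ?_⟩
  intro t x hx
  show K (t, x) = g x
  rw [ContinuousMap.Homotopy.trans_apply]
  split_ifs with h
  · exact (hGrel _ x hx).trans (hfg x hx)
  · exact (hHrel _ x hx).trans (hfg x hx)

lemma srelcat_le_of_homotopy {B X : Type*} [TopologicalSpace B] [TopologicalSpace X]
    {C : Set B} {A : Set X} (f g : B → X) (hf : Continuous f) (hg : Continuous g)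
    (H : C(unitInterval × B, X))
    (hH0 : ∀ x, H (0, x) = f x) (hH1 : ∀ x, H (1, x) = g x)
    (hHrel : ∀ (t : unitInterval) (c : B), c ∈ C → H (t, c) = f c) :
    srelcat g C A ≤ srelcat f C A := by
  apply sInf_le_sInf
  rintro n ⟨m, rfl, V, hVo, hVc, hV⟩
  exact ⟨m, rfl, V, hVo, hVc, fun i => sri_transfer f g hf hg H hH0 hH1 hHrel (hV i)⟩

/-- `srelcat` is a relative homotopy invariant: if
`f, g : (B,C) → (X,A)` are homotopic relative to `C`, then `srelcat f = srelcat g`. -/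
theorem srelcat_homotopy_rel_invariant {B X : Type*} [TopologicalSpace B] [TopologicalSpace X]
    {C : Set B} {A : Set X} (f g : B → X) (hf : Continuous f) (hg : Continuous g)
    (hfCA : Set.MapsTo f C A) (hgCA : Set.MapsTo g C A)
    (H : C(unitInterval × B, X))
    (hH0 : ∀ x, H (0, x) = f x) (hH1 : ∀ x, H (1, x) = g x)
    (hHrel : ∀ (t : unitInterval) (c : B), c ∈ C → H (t, c) = f c) :
    srelcat f C A = srelcat g C A := by
  have hfg : ∀ c ∈ C, f c = g c := fun c hc => by rw [← hHrel 1 c hc, hH1]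
  refine le_antisymm ?_ (srelcat_le_of_homotopy f g hf hg H hH0 hH1 hHrel)
  refine srelcat_le_of_homotopy g f hg hf
    ⟨fun p => H (unitInterval.symm p.1, p.2), H.continuous.comp (by fun_prop)⟩
    (fun x => by simp [hH1 x]) (fun x => by simp [hH0 x])
    (fun t c hc => (hHrel _ c hc).trans (hfg c hc))
end

section
/- For maps of CW pairs f : (B,C) → (X,A) and g : (Y,D) → (B,C), one has srelcat(f ∘ g) ≤ min{srelcat(f), srelcat(g)}. -/
open Set unitInterval

section Aux

variable {Y B X : Type*} [TopologicalSpace Y] [TopologicalSpace B] [TopologicalSpace X]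
  {D : Set Y} {C : Set B} {A : Set X}

lemma srelcatLE_comp_left {f : B → X} {g : Y → B} (hg : Continuous g)
    (hgDC : Set.MapsTo g D C) {m : ℕ} (h : srelcatLE f C A m) :
    srelcatLE (f ∘ g) D A m := by
  obtain ⟨V, hVopen, hVcov, hV⟩ := h
  refine ⟨fun i => g ⁻¹' V i, fun i => (hVopen i).preimage hg, ?_, fun i => ?_⟩
  · ext x
    simp only [Set.mem_iUnion, Set.mem_preimage, Set.mem_univ, iff_true]
    have : g x ∈ ⋃ i, V i := hVcov ▸ Set.mem_univ _
    exact Set.mem_iUnion.mp this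
  · obtain ⟨H, h1, h0, hC⟩ := hV i
    refine ⟨H.comp ⟨fun p => (p.1, ⟨g p.2, p.2.2⟩), by fun_prop⟩, ?_, ?_, ?_⟩
    · intro x; exact h1 _
    · intro x; exact h0 _
    · intro t x hx; exact hC t _ (hgDC hx)

lemma srelcatLE_comp_right {f : B → X} {g : Y → B} (hf : Continuous f)
    (hfCA : Set.MapsTo f C A) {m : ℕ} (h : srelcatLE g D C m) :
    srelcatLE (f ∘ g) D A m := by
  obtain ⟨V, hVopen, hVcov, hV⟩ := h
  refine ⟨V, hVopen, hVcov, fun i => ?_⟩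
  obtain ⟨H, h1, h0, hC⟩ := hV i
  refine ⟨⟨fun p => f (H p), hf.comp H.continuous⟩, ?_, ?_, ?_⟩
  · intro x; simp [h1 x]
  · intro x; exact hfCA (h0 x)
  · intro t x hx; simp [hC t x hx]

end Aux

/-- `srelcat (f ∘ g) ≤ min{srelcat f, srelcat g}` for maps of pairs
`f : (B,C) → (X,A)` and `g : (Y,D) → (B,C)`. -/
theorem srelcat_comp_le {Y B X : Type*} [TopologicalSpace Y] [TopologicalSpace B]
    [TopologicalSpace X] {D : Set Y} {C : Set B} {A : Set X}
    (f : B → X) (g : Y → B) (hf : Continuous f) (hg : Continuous g)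
    (hfCA : Set.MapsTo f C A) (hgDC : Set.MapsTo g D C) :
    srelcat (f ∘ g) D A ≤ min (srelcat f C A) (srelcat g D C) := by
  refine le_min ?_ ?_ <;> apply sInf_le_sInf <;> rintro n ⟨m, rfl, hm⟩
  · exact ⟨m, rfl, srelcatLE_comp_left hg hgDC hm⟩
  · exact ⟨m, rfl, srelcatLE_comp_right hf hfCA hm⟩
end

section
/- Let f_i : (B_i, C_i) → (X_i, A_i), i = 1,2, be maps of CW pairs with B₁ × B₂ normal. Then srelcat(f₁ × f₂) ≤ srelcat(f₁) + srelcat(f₂) for the product map (B₁ × B₂, C₁ × C₂) → (X₁ × X₂, A₁ × A₂). In particular, srelcat(B × X, C × A) ≤ srelcat(B,C) + srelcat(X,A). -/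
open Set unitInterval

/-!
Take open covers `U₀, …, Uₘ` of `B₁` and `V₀, …, Vₙ` of `B₂` on whose members `f₁`, `f₂` are
strongly relatively inessential, and partitions of unity `(uᵢ)`, `(vⱼ)` on the normal space
`B₁ × B₂` subordinate to the pulled-back covers. For nonempty `S`, `T` let `W S T` be the open set
where the products `uᵢ vⱼ` with `(i, j) ∈ S × T` are positive and strictly exceed all other
products. Each point lies in `W S T` for `S`, `T` the indices where `u`, resp. `v`, is maximal,
each `W S T` lies in some `Uᵢ × Vⱼ`, and two different `W S T` with the same `|S| + |T|` are
disjoint, since their index sets `S × T` would have to be comparable. So the `m + n + 1` unions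
of the `W S T` with fixed `|S| + |T|` cover `B₁ × B₂`, and on each of them the products of the
homotopies for `f₁` and `f₂` glue.
-/

open Function Topology

section Inessential

variable {B X : Type*} [TopologicalSpace B] [TopologicalSpace X] {f : B → X} {C : Set B}
  {A : Set X}

theorem StronglyRelInessentialOn.mono {V V' : Set B} (h : StronglyRelInessentialOn f V C A)
    (hV : V' ⊆ V) : StronglyRelInessentialOn f V' C A := by
  obtain ⟨H, hH₁, hH₀, hHC⟩ := h
  exact ⟨H.comp ⟨fun z => (z.1, inclusion hV z.2), by fun_prop⟩,
    fun x => hH₁ _, fun x => hH₀ _, fun t x hx => hHC t _ hx⟩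

theorem StronglyRelInessentialOn.iUnion {ι : Type*} {W : ι → Set B} (hW : ∀ q, IsOpen (W q))
    (hd : Pairwise (Disjoint on W)) (h : ∀ q, StronglyRelInessentialOn f (W q) C A) :
    StronglyRelInessentialOn f (⋃ q, W q) C A := by
  choose H hH₁ hH₀ hHC using h
  let S : ι → Set (I × ↥(⋃ q, W q)) := fun q => {z | (z.2 : B) ∈ W q}
  let φ : ∀ q, C(S q, X) := fun q =>
    (H q).comp ⟨fun z => (z.1.1, ⟨z.1.2, z.2⟩), by fun_prop⟩
  have hφ : ∀ q q' z (hz : z ∈ S q) (hz' : z ∈ S q'), φ q ⟨z, hz⟩ = φ q' ⟨z, hz'⟩ := by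
    intro q q' z hz hz'
    obtain rfl : q = q' := hd.eq (not_disjoint_iff.2 ⟨_, hz, hz'⟩)
    rfl
  have hS : ∀ z, ∃ q, S q ∈ 𝓝 z := fun z =>
    let ⟨q, hq⟩ := mem_iUnion.1 z.2.2
    ⟨q, ((hW q).preimage (by fun_prop)).mem_nhds hq⟩
  let G := ContinuousMap.liftCover S φ hφ hS
  have hG : ∀ t (x : ↥(⋃ q, W q)) q (hq : (x : B) ∈ W q), G (t, x) = H q (t, ⟨x, hq⟩) :=
    fun t x q hq => ContinuousMap.liftCover_coe (⟨(t, x), hq⟩ : S q)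
  refine ⟨G, fun x => ?_, fun x => ?_, fun t x hx => ?_⟩ <;>
    obtain ⟨q, hq⟩ := mem_iUnion.1 x.2 <;> rw [hG _ x q hq]
  exacts [hH₁ q _, hH₀ q _, hHC q t _ hx]

end Inessential

theorem StronglyRelInessentialOn.prodMap {B₁ B₂ X₁ X₂ : Type*} [TopologicalSpace B₁]
    [TopologicalSpace B₂] [TopologicalSpace X₁] [TopologicalSpace X₂] {f₁ : B₁ → X₁}
    {f₂ : B₂ → X₂} {U : Set B₁} {V : Set B₂} {C₁ : Set B₁} {C₂ : Set B₂} {A₁ : Set X₁}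
    {A₂ : Set X₂} (h₁ : StronglyRelInessentialOn f₁ U C₁ A₁)
    (h₂ : StronglyRelInessentialOn f₂ V C₂ A₂) :
    StronglyRelInessentialOn (Prod.map f₁ f₂) (U ×ˢ V) (C₁ ×ˢ C₂) (A₁ ×ˢ A₂) := by
  obtain ⟨H₁, hH₁₁, hH₁₀, hH₁C⟩ := h₁
  obtain ⟨H₂, hH₂₁, hH₂₀, hH₂C⟩ := h₂
  refine ⟨⟨fun z => (H₁ (z.1, ⟨z.2.1.1, z.2.2.1⟩), H₂ (z.1, ⟨z.2.1.2, z.2.2.2⟩)), by fun_prop⟩,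
    fun x => Prod.ext (hH₁₁ _) (hH₂₁ _), fun x => ⟨hH₁₀ _, hH₂₀ _⟩,
    fun t x hx => Prod.ext (hH₁C t _ hx.1) (hH₂C t _ hx.2)⟩

def Dominates {κ : Type*} (x : κ → ℝ) (R : Set κ) : Prop :=
  ∀ a ∈ R, 0 < x a ∧ ∀ b ∉ R, x b < x a

theorem Dominates.subset_or_subset {κ : Type*} {x : κ → ℝ} {R R' : Set κ} (h : Dominates x R)
    (h' : Dominates x R') : R ⊆ R' ∨ R' ⊆ R := by
  by_contra! hRR'
  obtain ⟨a, ha, ha'⟩ := not_subset.1 hRR'.1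
  obtain ⟨b, hb', hb⟩ := not_subset.1 hRR'.2
  exact lt_asymm ((h a ha).2 b hb) ((h' b hb').2 a ha')

theorem dominates_mul_setOf_isMax {ι κ : Type*} {x : ι → ℝ} {y : κ → ℝ} {i₀ : ι} {j₀ : κ}
    (hx : 0 ≤ x) (hy : 0 ≤ y) (hi₀ : 0 < x i₀) (hj₀ : 0 < y j₀) :
    Dominates (fun a : ι × κ => x a.1 * y a.2)
      ({i | ∀ i', x i' ≤ x i} ×ˢ {j | ∀ j', y j' ≤ y j}) := by
  rintro ⟨i, j⟩ ⟨hi, hj⟩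
  have hxi : 0 < x i := hi₀.trans_le (hi i₀)
  have hyj : 0 < y j := hj₀.trans_le (hj j₀)
  refine ⟨mul_pos hxi hyj, fun ⟨i', j'⟩ hij' => ?_⟩
  rcases not_and_or.1 hij' with hi' | hj'
  · obtain ⟨i'', hi''⟩ : ∃ i'', x i' < x i'' := by simpa using hi'
    calc x i' * y j' ≤ x i' * y j := mul_le_mul_of_nonneg_left (hj j') (hx i')
      _ < x i * y j := mul_lt_mul_of_pos_right (hi''.trans_le (hi i'')) hyj
  · obtain ⟨j'', hj''⟩ : ∃ j'', y j' < y j'' := by simpa using hj'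
    calc x i' * y j' ≤ x i * y j' := mul_le_mul_of_nonneg_right (hi i') (hy j')
      _ < x i * y j := mul_lt_mul_of_pos_left (hj''.trans_le (hj j'')) hxi

theorem isOpen_setOf_dominates {Z κ : Type*} [TopologicalSpace Z] [Finite κ] {φ : κ → Z → ℝ}
    (hφ : ∀ a, Continuous (φ a)) (R : Set κ) : IsOpen {p | Dominates (φ · p) R} := by
  have : {p | Dominates (φ · p) R} =
      ⋂ a ∈ R, ({p | 0 < φ a p} ∩ ⋂ b ∈ Rᶜ, {p | φ b p < φ a p}) := by
    ext p
    simp [Dominates]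
  rw [this]
  exact R.toFinite.isOpen_biInter fun a _ => (isOpen_lt continuous_const (hφ a)).inter <|
    Rᶜ.toFinite.isOpen_biInter fun b _ => isOpen_lt (hφ b) (hφ a)

theorem exists_leveled_disjoint_open_refinement_inter {Z : Type*} [TopologicalSpace Z]
    [NormalSpace Z] {m n : ℕ} {U : Fin (m + 1) → Set Z} {V : Fin (n + 1) → Set Z}
    (hUo : ∀ i, IsOpen (U i)) (hVo : ∀ j, IsOpen (V j)) (hUc : ⋃ i, U i = univ)
    (hVc : ⋃ j, V j = univ) :
    ∃ (ι : Type) (W : ι → Set Z) (level : ι → Fin (m + n + 1)), (∀ q, IsOpen (W q)) ∧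
      ⋃ q, W q = univ ∧ (∀ q, ∃ i j, W q ⊆ U i ∩ V j) ∧
      ∀ q q', q ≠ q' → level q = level q' → Disjoint (W q) (W q') := by
  obtain ⟨u, hu⟩ := PartitionOfUnity.exists_isSubordinate_of_locallyFinite isClosed_univ U hUo
    (locallyFinite_of_finite U) hUc.ge
  obtain ⟨v, hv⟩ := PartitionOfUnity.exists_isSubordinate_of_locallyFinite isClosed_univ V hVo
    (locallyFinite_of_finite V) hVc.ge
  let ι := {ST : Finset (Fin (m + 1)) × Finset (Fin (n + 1)) // ST.1.Nonempty ∧ ST.2.Nonempty}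
  let W : ι → Set Z := fun q =>
    {p | Dominates (fun a => u a.1 p * v a.2 p) (↑q.1.1 ×ˢ ↑q.1.2)}
  have hcard : ∀ (S : Finset (Fin (m + 1))) (T : Finset (Fin (n + 1))), S.Nonempty →
      T.Nonempty → 2 ≤ S.card + T.card ∧ S.card + T.card ≤ m + n + 2 := by
    intro S T hS hT
    have := S.card_le_univ
    have := T.card_le_univ
    simp only [Fintype.card_fin] at *
    have := hS.card_pos
    have := hT.card_pos
    omega
  let level : ι → Fin (m + n + 1) := fun q =>
    ⟨q.1.1.card + q.1.2.card - 2, by have := hcard _ _ q.2.1 q.2.2; omega⟩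
  have eq_of_level_eq_of_subset : ∀ q q' : ι, level q = level q' →
      (↑q.1.1 ×ˢ ↑q.1.2 : Set (Fin (m + 1) × Fin (n + 1))) ⊆ ↑q'.1.1 ×ˢ ↑q'.1.2 → q = q' := by
    rintro ⟨⟨S, T⟩, hS, hT⟩ ⟨⟨S', T'⟩, hS', hT'⟩ hl hsub
    obtain ⟨hSS', hTT'⟩ := (prod_subset_prod_iff' ((Finset.coe_nonempty.2 hS).prod
      (Finset.coe_nonempty.2 hT))).1 hsub
    rw [Finset.coe_subset] at hSS' hTT'
    have hl' : S.card + T.card - 2 = S'.card + T'.card - 2 := Fin.ext_iff.1 hl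
    have : S.card ≤ S'.card := Finset.card_le_card hSS'
    have : T.card ≤ T'.card := Finset.card_le_card hTT'
    have := hcard S T hS hT
    have := hcard S' T' hS' hT'
    obtain rfl : S = S' := Finset.eq_of_subset_of_card_le hSS' (by omega)
    obtain rfl : T = T' := Finset.eq_of_subset_of_card_le hTT' (by omega)
    rfl
  refine ⟨ι, W, level, fun q => isOpen_setOf_dominates (fun a => by fun_prop) _, ?_, ?_, ?_⟩
  · refine eq_univ_of_forall fun p => ?_
    obtain ⟨i₀, hi₀⟩ := u.exists_pos (mem_univ p)
    obtain ⟨j₀, hj₀⟩ := v.exists_pos (mem_univ p)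
    have hS := toFinite {i | ∀ i', u i' p ≤ u i p}
    have hT := toFinite {j | ∀ j', v j' p ≤ v j p}
    refine mem_iUnion.2 ⟨⟨(hS.toFinset, hT.toFinset),
      hS.toFinset_nonempty.2 (Finite.exists_max (u · p)),
      hT.toFinset_nonempty.2 (Finite.exists_max (v · p))⟩, ?_⟩
    show Dominates _ ((hS.toFinset : Set (Fin (m + 1))) ×ˢ (hT.toFinset : Set (Fin (n + 1))))
    rw [hS.coe_toFinset, hT.coe_toFinset]
    exact dominates_mul_setOf_isMax (fun i => u.nonneg i p) (fun j => v.nonneg j p) hi₀ hj₀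
  · rintro ⟨⟨S, T⟩, ⟨i, hi⟩, ⟨j, hj⟩⟩
    refine ⟨i, j, fun p hp => ?_⟩
    have hpos := (hp (i, j) ⟨hi, hj⟩).1
    exact ⟨hu i (subset_tsupport _ (left_ne_zero_of_mul hpos.ne')),
      hv j (subset_tsupport _ (right_ne_zero_of_mul hpos.ne'))⟩
  · intro q q' hne hl
    refine disjoint_left.2 fun p hp hp' => ?_
    rcases Dominates.subset_or_subset hp hp' with h | h
    exacts [hne (eq_of_level_eq_of_subset q q' hl h), hne (eq_of_level_eq_of_subset q' q hl.symm h).symm]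

theorem ENat.sInf_setOf_natCast_le_add {P Q R : ℕ → Prop}
    (h : ∀ m n, P m → Q n → R (m + n)) :
    sInf {k : ℕ∞ | ∃ m : ℕ, k = m ∧ R m} ≤
      sInf {k : ℕ∞ | ∃ m : ℕ, k = m ∧ P m} + sInf {k : ℕ∞ | ∃ m : ℕ, k = m ∧ Q m} := by
  rw [sInf_eq_iInf (s := {k : ℕ∞ | ∃ m : ℕ, k = m ∧ P m}),
    sInf_eq_iInf (s := {k : ℕ∞ | ∃ m : ℕ, k = m ∧ Q m})]
  refine ENat.le_iInf₂_add_iInf₂ ?_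
  rintro _ ⟨m, rfl, hm⟩ _ ⟨n, rfl, hn⟩
  exact sInf_le ⟨m + n, by push_cast; rfl, h m n hm hn⟩

section Product

variable {B₁ B₂ X₁ X₂ : Type*} [TopologicalSpace B₁] [TopologicalSpace B₂] [TopologicalSpace X₁]
  [TopologicalSpace X₂] [NormalSpace (B₁ × B₂)] {C₁ : Set B₁} {C₂ : Set B₂} {A₁ : Set X₁}
  {A₂ : Set X₂}

theorem srelcatLE_prodMap {f₁ : B₁ → X₁} {f₂ : B₂ → X₂} {m n : ℕ}
    (h₁ : srelcatLE f₁ C₁ A₁ m) (h₂ : srelcatLE f₂ C₂ A₂ n) :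
    srelcatLE (Prod.map f₁ f₂) (C₁ ×ˢ C₂) (A₁ ×ˢ A₂) (m + n) := by
  obtain ⟨U, hUo, hUc, hU⟩ := h₁
  obtain ⟨V, hVo, hVc, hV⟩ := h₂
  obtain ⟨ι, W, level, hWo, hWc, hWUV, hWd⟩ :=
    exists_leveled_disjoint_open_refinement_inter (U := fun i => Prod.fst ⁻¹' U i)
      (V := fun j => Prod.snd ⁻¹' V j) (fun i => (hUo i).preimage continuous_fst)
      (fun j => (hVo j).preimage continuous_snd) (by simp [← preimage_iUnion, hUc])
      (by simp [← preimage_iUnion, hVc])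
  refine ⟨fun k => ⋃ q : {q // level q = k}, W q, fun k => isOpen_iUnion fun q => hWo q,
    eq_univ_of_forall fun p => ?_, fun k => ?_⟩
  · obtain ⟨q, hq⟩ := mem_iUnion.1 (hWc ▸ mem_univ p)
    exact mem_iUnion.2 ⟨level q, mem_iUnion.2 ⟨⟨q, rfl⟩, hq⟩⟩
  · refine .iUnion (fun q => hWo q)
      (fun q q' hne => hWd q q' (Subtype.coe_injective.ne hne) (q.2.trans q'.2.symm)) fun q => ?_
    obtain ⟨i, j, hij⟩ := hWUV q
    exact ((hU i).prodMap (hV j)).mono hij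

theorem srelcat_prodMap_le (f₁ : B₁ → X₁) (f₂ : B₂ → X₂) :
    srelcat (Prod.map f₁ f₂) (C₁ ×ˢ C₂) (A₁ ×ˢ A₂) ≤ srelcat f₁ C₁ A₁ + srelcat f₂ C₂ A₂ :=
  ENat.sInf_setOf_natCast_le_add fun _ _ => srelcatLE_prodMap

end Product

theorem srelcat_prod_le_general {B₁ B₂ X₁ X₂ : Type*} [TopologicalSpace B₁] [TopologicalSpace B₂]
    [TopologicalSpace X₁] [TopologicalSpace X₂] [NormalSpace (B₁ × B₂)]
    {C₁ : Set B₁} {C₂ : Set B₂} {A₁ : Set X₁} {A₂ : Set X₂}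
    (f₁ : B₁ → X₁) (f₂ : B₂ → X₂) :
    srelcat (Prod.map f₁ f₂) (C₁ ×ˢ C₂) (A₁ ×ˢ A₂)
      ≤ srelcat f₁ C₁ A₁ + srelcat f₂ C₂ A₂ ∧
    srelcat (id : B₁ × B₂ → B₁ × B₂) (C₁ ×ˢ C₂) (C₁ ×ˢ C₂)
      ≤ srelcat (id : B₁ → B₁) C₁ C₁ + srelcat (id : B₂ → B₂) C₂ C₂ := by
  refine ⟨srelcat_prodMap_le f₁ f₂, ?_⟩
  simpa only [Prod.map_id] using srelcat_prodMap_le (C₁ := C₁) (C₂ := C₂) (A₁ := C₁) (A₂ := C₂)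
    (id : B₁ → B₁) (id : B₂ → B₂)

/-- product inequality for `srelcat`:
`srelcat (f₁ × f₂) ≤ srelcat f₁ + srelcat f₂` for maps of pairs
`fᵢ : (Bᵢ,Cᵢ) → (Xᵢ,Aᵢ)` with `B₁ × B₂` normal; in particular
`srelcat (B₁ × B₂, C₁ × C₂) ≤ srelcat (B₁,C₁) + srelcat (B₂,C₂)`. -/
theorem srelcat_prod_le {B₁ B₂ X₁ X₂ : Type*} [TopologicalSpace B₁] [TopologicalSpace B₂]
    [TopologicalSpace X₁] [TopologicalSpace X₂] [NormalSpace (B₁ × B₂)]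
    {C₁ : Set B₁} {C₂ : Set B₂} {A₁ : Set X₁} {A₂ : Set X₂}
    (f₁ : B₁ → X₁) (f₂ : B₂ → X₂) (hf₁ : Continuous f₁) (hf₂ : Continuous f₂)
    (h₁ : Set.MapsTo f₁ C₁ A₁) (h₂ : Set.MapsTo f₂ C₂ A₂) :
    srelcat (Prod.map f₁ f₂) (C₁ ×ˢ C₂) (A₁ ×ˢ A₂)
      ≤ srelcat f₁ C₁ A₁ + srelcat f₂ C₂ A₂ ∧
    srelcat (id : B₁ × B₂ → B₁ × B₂) (C₁ ×ˢ C₂) (C₁ ×ˢ C₂)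
      ≤ srelcat (id : B₁ → B₁) C₁ C₁ + srelcat (id : B₂ → B₂) C₂ C₂ :=
  srelcat_prod_le_general f₁ f₂
end

section
/- Let X = S¹ × S¹ and A = {(x,x) : x ∈ S¹} be the diagonal. Then srelcat(X,A) = 1. -/
open Set unitInterval

/-!
For a topological group `G`, the homeomorphism `(x, y) ↦ (x, x / y)` of `G × G` carries the
diagonal to `G × {1}`. Hence a strongly relative categorical set for `(G, {1})` pulls back along
division to one for `(G × G, Δ)`, and one for `(G × G, Δ)` restricts along `g ↦ (g, 1)` to one
for `(G, {1})`, so `srelcat (G × G, Δ) = srelcat (G, {1})`.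

For `G = S¹` the sets `S¹ \ {-1}` and `S¹ \ {1}` contract to `1` along continuous branches of the
argument, the first one fixing `1`. A single set would give a null-homotopy of `id_{S¹}`; lifting
it through the covering `exp : ℝ → S¹` would give a continuous logarithm on `S¹`, which does not
exist.
-/

section General

variable {X X' Y Y' : Type*} [TopologicalSpace X] [TopologicalSpace X'] [TopologicalSpace Y]
  [TopologicalSpace Y']

lemma srelcatLE.of_preimage {f : X → Y} {f' : X' → Y'} {C : Set X} {A : Set Y} {C' : Set X'}
    {A' : Set Y'} {n : ℕ} {φ : X → X'} (hφ : Continuous φ)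
    (hV : ∀ V', StronglyRelInessentialOn f' V' C' A' → StronglyRelInessentialOn f (φ ⁻¹' V') C A)
    (h : srelcatLE f' C' A' n) : srelcatLE f C A n := by
  obtain ⟨V, hVo, hVc, hV'⟩ := h
  exact ⟨fun k => φ ⁻¹' V k, fun k => (hVo k).preimage hφ,
    by rw [← preimage_iUnion, hVc, preimage_univ], fun k => hV _ (hV' k)⟩

lemma StronglyRelInessentialOn.preimage_of_leftInverse {i : X → X'} {r : X' → X}
    (hi : Continuous i) (hr : Continuous r) (hri : Function.LeftInverse r i)
    {C A : Set X} {C' A' : Set X'} (hC : MapsTo i C C') (hA : MapsTo r A' A) {V' : Set X'}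
    (h : StronglyRelInessentialOn id V' C' A') : StronglyRelInessentialOn id (i ⁻¹' V') C A := by
  obtain ⟨H, hH1, hH0, hHrel⟩ := h
  refine ⟨⟨fun q => r (H (q.1, ⟨i q.2, q.2.2⟩)), by fun_prop⟩, fun x => ?_, fun x => hA (hH0 _),
    fun t x hx => ?_⟩
  · simp [hH1, hri x]
  · simp [hHrel t ⟨i x, x.2⟩ (hC hx), hri x]

lemma srelcatLE_zero_iff {f : X → Y} {C : Set X} {A : Set Y} :
    srelcatLE f C A 0 ↔ StronglyRelInessentialOn f univ C A := by
  refine ⟨fun ⟨V, _, hVc, hV⟩ => ?_,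
    fun h => ⟨fun _ => univ, fun _ => isOpen_univ, iUnion_const _, fun _ => h⟩⟩
  have hV0 : V 0 = univ := eq_univ_of_forall fun x => by
    obtain ⟨i, hi⟩ := mem_iUnion.mp (hVc ▸ mem_univ x)
    rwa [Fin.fin_one_eq_zero i] at hi
  exact hV0 ▸ hV 0

lemma StronglyRelInessentialOn.nullhomotopicOn {f : X → Y} {V C : Set X} {y : Y}
    (h : StronglyRelInessentialOn f V C {y}) : NullhomotopicOn f V :=
  let ⟨H, h1, h0, _⟩ := h
  ⟨H, y, h1, h0⟩

lemma srelcat_eq_of_srelcatLE {f : X → Y} {C : Set X} {A : Set Y} {n : ℕ}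
    (hn : srelcatLE f C A n) (hlt : ∀ m < n, ¬ srelcatLE f C A m) : srelcat f C A = n := by
  refine le_antisymm (sInf_le ⟨n, rfl, hn⟩) (le_sInf ?_)
  rintro _ ⟨m, rfl, hm⟩
  exact_mod_cast not_lt.mp fun hmn => hlt m hmn hm

end General

section Group

variable {G : Type*} [Group G] [TopologicalSpace G] [IsTopologicalGroup G]

lemma StronglyRelInessentialOn.preimage_div {V : Set G}
    (h : StronglyRelInessentialOn id V {1} {1}) :
    StronglyRelInessentialOn (id : G × G → G × G) ((fun p => p.1 / p.2) ⁻¹' V)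
      {p | p.1 = p.2} {p | p.1 = p.2} := by
  obtain ⟨H, hH1, hH0, hHrel⟩ := h
  refine ⟨⟨fun q => (q.2.1.1, (H (q.1, ⟨q.2.1.1 / q.2.1.2, q.2.2⟩))⁻¹ * q.2.1.1), by fun_prop⟩,
    fun x => ?_, fun x => ?_, fun t x hx => ?_⟩
  · simp [hH1]
  · simp [show H _ = 1 from hH0 _]
  · simp [hHrel t ⟨_, x.2⟩ (div_eq_one.mpr hx)]

lemma srelcatLE_prod_diagonal_iff {n : ℕ} :
    srelcatLE (id : G × G → G × G) {p | p.1 = p.2} {p | p.1 = p.2} n ↔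
      srelcatLE (id : G → G) {1} {1} n :=
  ⟨.of_preimage (φ := fun g => (g, 1)) (by fun_prop) fun _ h =>
      h.preimage_of_leftInverse (by fun_prop) continuous_div' (fun g => div_one g)
        (by rintro _ rfl; rfl) (fun _ hp => div_eq_one.mpr hp),
    .of_preimage continuous_div' fun _ h => h.preimage_div⟩

theorem srelcat_prod_diagonal :
    srelcat (id : G × G → G × G) {p | p.1 = p.2} {p | p.1 = p.2} =
      srelcat (id : G → G) {1} {1} := by
  simp only [srelcat, srelcatLE_prod_diagonal_iff]

end Group

namespace Circle

lemma exp_pi : exp Real.pi = -1 := by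
  ext
  simp [Complex.exp_pi_mul_I]

theorem exp_comp_ne_id {θ : Circle → ℝ} (hθ : Continuous θ) : exp ∘ θ ≠ id := by
  intro h
  have hθ_exp : ∀ z, exp (θ z) = z := congr_fun h
  -- `g` takes values in `2πℤ` but drops by `2π` on `[0, 2π]`, so it also hits `π + 2πℤ`.
  set g : ℝ → ℝ := fun s => θ (exp s) - s
  have hg : Continuous g := by fun_prop
  have hg_exp (s : ℝ) : exp (g s) = 1 := by simp [g, exp_sub, hθ_exp]
  have hg_period : g (2 * Real.pi) = g 0 - 2 * Real.pi := by simp [g]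
  obtain ⟨s, -, hs⟩ : g 0 - Real.pi ∈ g '' Icc 0 (2 * Real.pi) :=
    intermediate_value_Icc' (by positivity) hg.continuousOn
      ⟨by rw [hg_period]; linarith [Real.pi_pos], by linarith [Real.pi_pos]⟩
  apply exp_pi_ne_one
  have := hg_exp s
  rw [hs, exp_sub, hg_exp 0] at this
  simpa using this

theorem not_nullhomotopicOn_id : ¬ NullhomotopicOn (id : Circle → Circle) univ := by
  rintro ⟨H, y, h1, h0⟩
  let L := isCoveringMap_exp.liftHomotopy H (.const _ (Complex.arg y))
    (fun _ => by rw [h0, ContinuousMap.const_apply, exp_arg])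
  have hL : Continuous fun z : Circle => L (1, ⟨z, trivial⟩) :=
    L.continuous.comp (continuous_const.prodMk (continuous_id.subtype_mk _))
  refine exp_comp_ne_id hL (funext fun z => ?_)
  exact (congr_fun (isCoveringMap_exp.liftHomotopy_lifts H _ _) (1, ⟨z, trivial⟩)).trans (h1 _)

theorem not_srelcatLE_zero : ¬ srelcatLE (id : Circle → Circle) {1} {1} 0 :=
  fun h => not_nullhomotopicOn_id (srelcatLE_zero_iff.mp h).nullhomotopicOn

lemma continuousOn_arg : ContinuousOn (fun z : Circle => Complex.arg z) {z | z ≠ -1} := by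
  refine fun z hz => ((Complex.continuousAt_arg ?_).comp
    continuous_subtype_val.continuousAt).continuousWithinAt
  refine Complex.mem_slitPlane_iff_arg.mpr ⟨fun h => hz ?_, z.coe_ne_zero⟩
  rw [← exp_arg z, h, exp_pi]

lemma stronglyRelInessentialOn_of_exp {V : Set Circle} {θ : Circle → ℝ} (hθ : ContinuousOn θ V)
    (hexp : ∀ z ∈ V, exp (θ z) = z) (h1 : 1 ∈ V → θ 1 = 0) :
    StronglyRelInessentialOn id V {1} {1} := by
  have := hθ.domRestrict
  refine ⟨⟨fun q => exp (q.1 * V.domRestrict θ q.2), exp.continuous.comp (by fun_prop)⟩,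
    fun z => ?_, fun z => ?_, ?_⟩
  · simp [domRestrict_apply, hexp z z.2]
  · simp
  · rintro t ⟨z, hz⟩ rfl
    simp [domRestrict_apply, h1 hz]

theorem srelcatLE_one : srelcatLE (id : Circle → Circle) {1} {1} 1 := by
  refine ⟨![{z | z ≠ -1}, {z | z ≠ 1}], Fin.forall_fin_two.mpr ⟨isOpen_ne, isOpen_ne⟩, ?_,
    Fin.forall_fin_two.mpr ⟨?_, ?_⟩⟩
  · refine eq_univ_of_forall fun z => mem_iUnion.mpr ?_
    by_cases hz : z = 1
    · exact ⟨0, show z ≠ -1 from hz ▸ (neg_ne_self 1).symm⟩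
    · exact ⟨1, hz⟩
  · exact stronglyRelInessentialOn_of_exp continuousOn_arg (fun z _ => exp_arg z)
      (fun _ => by simp)
  · refine stronglyRelInessentialOn_of_exp (θ := fun z => Complex.arg ↑(-z) + Real.pi)
      ((continuousOn_arg.comp continuous_neg.continuousOn fun z hz => ?_).add continuousOn_const)
      (fun z _ => by simp only [exp_add, exp_arg, exp_pi, mul_neg_one, neg_neg])
      (fun h => absurd rfl h)
    simpa [neg_eq_iff_eq_neg] using hz

theorem srelcat_id_one : srelcat (id : Circle → Circle) {1} {1} = 1 :=
  srelcat_eq_of_srelcatLE srelcatLE_one fun m hm => by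
    obtain rfl : m = 0 := by omega
    exact not_srelcatLE_zero

end Circle

/-- for the torus `X = S¹ × S¹` and its diagonal `A`,
`srelcat(X, A) = 1`. -/
theorem srelcat_torus_diagonal :
    srelcat (id : ↥(Metric.sphere (0 : ℂ) 1) × ↥(Metric.sphere (0 : ℂ) 1) →
        ↥(Metric.sphere (0 : ℂ) 1) × ↥(Metric.sphere (0 : ℂ) 1))
      {p | p.1 = p.2} {p | p.1 = p.2} = 1 := by
  rw [srelcat_prod_diagonal]
  -- `Circle` is by definition this sphere, with the same group structure and topology.
  exact Circle.srelcat_id_one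
end

section
/- For every n ≥ 2 and every map f : X → Y of path-connected CW complexes, TCₙ(f) ≤ TC_{n+1}(f). -/
open Set unitInterval

/-- `TCₙ(f) ≤ TC_{n+1}(f)` for every `n ≥ 2` and every map `f : X → Y`
of path-connected spaces. -/
theorem TCmap_mono {X Y : Type*} [TopologicalSpace X] [TopologicalSpace Y]
    [PathConnectedSpace X] [PathConnectedSpace Y]
    (f : X → Y) (hf : Continuous f) (n : ℕ) (hn : 2 ≤ n) :
    TCmap n f ≤ TCmap (n + 1) f := by
  have hpos : 0 < n := by omega
  apply sInf_le_sInf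
  rintro e ⟨m, rfl, W, hWo, hWu, hWd⟩
  refine ⟨m, rfl, ?_⟩
  set j : (Fin n → X) → (Fin (n + 1) → X) :=
    fun x i => x (if h : (i : ℕ) < n then ⟨i, h⟩ else ⟨0, hpos⟩) with hj
  have hjc : Continuous j := continuous_pi fun i => continuous_apply _
  refine ⟨fun i => j ⁻¹' (W i), fun i => (hWo i).preimage hjc, ?_, ?_⟩
  · ext x
    simp only [mem_iUnion, mem_preimage, mem_univ, iff_true]
    exact mem_iUnion.mp (by rw [hWu]; exact mem_univ (j x))
  · intro i
    obtain ⟨H, h1, h0⟩ := hWd i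
    refine ⟨⟨fun p => fun k : Fin n => H (p.1, ⟨j p.2, p.2.2⟩) (Fin.castLE (by omega) k), ?_⟩,
      ?_, ?_⟩
    · exact continuous_pi fun k => (continuous_apply _).comp (H.continuous.comp
        (continuous_fst.prodMk
          ((hjc.comp (continuous_subtype_val.comp continuous_snd)).subtype_mk _)))
    · intro x
      ext k
      simp only [ContinuousMap.coe_mk]
      rw [h1]
      simp [hj, Fin.castLE]
    · intro x i' j'
      exact h0 _ (Fin.castLE (by omega) i') (Fin.castLE (by omega) j')
end

section
/- Let f : S¹ → S¹ be the map z ↦ z^p with p > 0. Then TC₂(f) = 1, independently of the degree p. -/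
open Set unitInterval

/-!
Over each of the open sets `{x₀ / x₁ ≠ -1}` and `{x₀ / x₁ ≠ 1}`, which cover `S¹ × S¹`, the ratio
`x₀ / x₁` has a continuous logarithm, along which `x₁` can be rotated onto `x₀`. So already the
identity of `S¹ × S¹` deforms into the diagonal over two open sets, and `f × f` preserves the
diagonal. Conversely, a deformation of `f × f` into the diagonal over all of `S¹ × S¹`, restricted
to `S¹ × {z₀}`, makes `f` null-homotopic. For `z ↦ z ^ p` this is ruled out by lifting the
homotopy to the covering `ℝ → S¹`: the increment of the lift along the loop is a continuous
`2πℤ`-valued function of the homotopy parameter, yet it is `2πp` at one end and `0` at the other.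
-/

open Complex ContinuousMap

section MapsOfPairs

variable {X Y Z : Type*} [TopologicalSpace X] [TopologicalSpace Y] [TopologicalSpace Z]

lemma DeformsIntoOn.comp {f : X → Y} {V : Set X} {A : Set Y} (h : DeformsIntoOn f V A)
    {g : Y → Z} (hg : Continuous g) {B : Set Z} (hgAB : MapsTo g A B) :
    DeformsIntoOn (g ∘ f) V B := by
  obtain ⟨H, h1, h0⟩ := h
  exact ⟨(⟨g, hg⟩ : C(Y, Z)).comp H, fun x => congrArg g (h1 x), fun x => hgAB (h0 x)⟩

lemma qscatLE.comp {f : X → Y} {A : Set Y} {n : ℕ} (h : qscatLE f A n)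
    {g : Y → Z} (hg : Continuous g) {B : Set Z} (hgAB : MapsTo g A B) :
    qscatLE (g ∘ f) B n := by
  obtain ⟨V, hV, hcover, hdef⟩ := h
  exact ⟨V, hV, hcover, fun i => (hdef i).comp hg hgAB⟩

lemma qscat_eq_of_qscatLE {f : X → Y} {A : Set Y} {n : ℕ} (hn : qscatLE f A n)
    (hlt : ∀ m < n, ¬ qscatLE f A m) : qscat f A = n := by
  refine le_antisymm (sInf_le ⟨n, rfl, hn⟩) (le_sInf ?_)
  rintro _ ⟨m, rfl, hm⟩
  exact_mod_cast not_lt.mp fun h => hlt m h hm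

lemma nullhomotopic_of_qscatLE_zero [Nonempty X] (f : C(X, Y))
    (h : qscatLE (fun x : Fin 2 → X => fun i => f (x i)) {y | ∀ i j, y i = y j} 0) :
    f.Nullhomotopic := by
  obtain ⟨V, -, hcover, hdef⟩ := h
  obtain ⟨H, h1, h0⟩ := hdef 0
  have hmem : ∀ x, x ∈ V 0 := fun x => by
    obtain ⟨i, hi⟩ := mem_iUnion.mp (hcover ▸ mem_univ x)
    rwa [Fin.fin_one_eq_zero i] at hi
  obtain ⟨x₀⟩ := ‹Nonempty X›
  let K : C(I × X, Fin 2 → Y) :=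
    H.comp ((ContinuousMap.id I).prodMap ⟨fun x => ⟨![x, x₀], hmem _⟩, by fun_prop⟩)
  let g : C(X, Y) := ⟨fun x => K (0, x) 0, by fun_prop⟩
  -- the two coordinates of `H` along `x ↦ (x, x₀)` join `f` and `const (f x₀)` to the same map
  have hf : g.Homotopic f := ⟨
    { toFun := fun q => K q 0
      map_zero_left := fun _ => rfl
      map_one_left := fun x => by simp [K, h1] }⟩
  have hc : g.Homotopic (const X (f x₀)) := ⟨
    { toFun := fun q => K q 1
      map_zero_left := fun _ => h0 _ 1 0
      map_one_left := fun x => by simp [K, h1] }⟩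
  exact ⟨f x₀, hf.symm.trans hc⟩

end MapsOfPairs

namespace Circle

lemma coe_mem_slitPlane {z : Circle} (hz : z ≠ -1) : (z : ℂ) ∈ slitPlane := by
  refine mem_slitPlane_iff_arg.mpr ⟨fun h => hz (arg_eq_arg.mp ?_), z.coe_ne_zero⟩
  rw [h, coe_neg, coe_one, arg_neg_one]

lemma exists_log_continuousOn_compl (w : Circle) :
    ∃ θ : Circle → ℝ, ContinuousOn θ {w}ᶜ ∧ ∀ z, exp (θ z) = z := by
  refine ⟨fun z => arg ((-(z / w) : Circle) : ℂ) + arg ((-w : Circle) : ℂ), ?_, fun z => ?_⟩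
  · intro z hz
    have hz' : -(z / w) ≠ -1 := fun h => hz (div_eq_one.mp (neg_inj.mp h))
    have hcoe : Continuous fun z : Circle => ((-(z / w) : Circle) : ℂ) := by fun_prop
    exact ((continuousAt_arg (coe_mem_slitPlane hz')).comp_of_eq hcoe.continuousAt rfl).add
      continuousAt_const |>.continuousWithinAt
  · rw [exp_add, exp_arg, exp_arg, neg_mul_neg, div_mul_cancel]

theorem not_nullhomotopic_zpow {n : ℤ} (hn : n ≠ 0) :
    ¬ (⟨(· ^ n), continuous_zpow n⟩ : C(Circle, Circle)).Nullhomotopic := by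
  rintro ⟨y, ⟨F⟩⟩
  let loop : C(I, Circle) := ⟨fun s => exp (2 * Real.pi * s), by fun_prop⟩
  let L : C(I × I, Circle) := F.toContinuousMap.comp ((ContinuousMap.id I).prodMap loop)
  let ℓ₀ : C(I, ℝ) := ⟨fun s => n * (2 * Real.pi * s), by fun_prop⟩
  have hL₀ : ∀ s, L (0, s) = exp (ℓ₀ s) := fun s => by simp [L, loop, ℓ₀]
  set ℓ := isCoveringMap_exp.liftHomotopy L ℓ₀ hL₀
  have hℓ₀ : ∀ s, ℓ (0, s) = ℓ₀ s := isCoveringMap_exp.liftHomotopy_zero L ℓ₀ hL₀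
  have hℓ : ∀ q, exp (ℓ q) = L q := congrFun (isCoveringMap_exp.liftHomotopy_lifts L ℓ₀ hL₀)
  have hend : ℓ (1, 0) = ℓ (1, 1) :=
    isCoveringMap_exp.const_of_comp (g := fun s => ℓ (1, s)) (by fun_prop)
      (fun s s' => by simp [hℓ, L]) 0 1
  have hwind : ℓ (0, 1) - ℓ (0, 0) = ℓ (1, 1) - ℓ (1, 0) :=
    isCoveringMap_exp.const_of_comp (g := fun t => ℓ (t, 1) - ℓ (t, 0)) (by fun_prop)
      (fun t t' => by simp [exp_sub, hℓ, L, loop]) 0 1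
  rw [hℓ₀, hℓ₀, hend, sub_self] at hwind
  exact hn (by simpa [ℓ₀, Real.pi_ne_zero] using hwind)

lemma deformsIntoOn_id_div_ne (w : Circle) :
    DeformsIntoOn id {x : Fin 2 → Circle | x 0 / x 1 ≠ w} {y | ∀ i j, y i = y j} := by
  obtain ⟨θ, hθ, hexp⟩ := exists_log_continuousOn_compl w
  set V := {x : Fin 2 → Circle | x 0 / x 1 ≠ w}
  have hθV : Continuous fun x : V => θ ((x : Fin 2 → Circle) 0 / (x : Fin 2 → Circle) 1) :=
    hθ.comp_continuous (((continuous_apply 0).comp continuous_subtype_val).div'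
      ((continuous_apply 1).comp continuous_subtype_val)) fun x => x.2
  refine ⟨⟨fun q => Function.update (q.2 : Fin 2 → Circle) 1 ((q.2 : Fin 2 → Circle) 1 *
    exp ((1 - q.1) * θ ((q.2 : Fin 2 → Circle) 0 / (q.2 : Fin 2 → Circle) 1))), ?_⟩,
    fun x => ?_, fun x => ?_⟩
  · exact (continuous_subtype_val.comp continuous_snd).update 1
      (((continuous_apply 1).comp (continuous_subtype_val.comp continuous_snd)).mul
        (exp.continuous.comp
          ((continuous_const.sub (continuous_subtype_val.comp continuous_fst)).mul
            (hθV.comp continuous_snd))))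
  · simp
  · simp [Fin.forall_fin_two, hexp]

lemma qscatLE_id_diagonal_one :
    qscatLE (id : (Fin 2 → Circle) → _) {y | ∀ i j, y i = y j} 1 := by
  refine ⟨![{x | x 0 / x 1 ≠ -1}, {x | x 0 / x 1 ≠ 1}], ?_, ?_, ?_⟩
  · intro i
    fin_cases i <;> exact isOpen_compl_singleton.preimage
      ((continuous_apply 0).div' (continuous_apply 1))
  · refine eq_univ_of_forall fun x => mem_iUnion.mpr ?_
    by_cases hx : x 0 / x 1 = -1
    · exact ⟨1, by simpa [hx] using neg_ne_self 1⟩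
    · exact ⟨0, hx⟩
  · intro i
    fin_cases i <;> exact deformsIntoOn_id_div_ne _

end Circle

/-- for `f : S¹ → S¹`, `z ↦ z^p` with `p > 0`, one has `TC₂(f) = 1`,
independently of `p`. -/
theorem TC2_circle_power (p : ℕ) (hp : 0 < p) :
    TCmap 2 (fun z : Circle => z ^ p) = 1 := by
  let f : C(Circle, Circle) := ⟨(· ^ p), continuous_pow p⟩
  have hupper : qscatLE (fun x : Fin 2 → Circle => fun i => f (x i)) {y | ∀ i j, y i = y j} 1 :=
    Circle.qscatLE_id_diagonal_one.comp (continuous_pi fun i => (continuous_apply i).pow p)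
      fun y hy i j => congrArg (· ^ p) (hy i j)
  have hf : ¬ f.Nullhomotopic := by
    convert Circle.not_nullhomotopic_zpow (Int.natCast_ne_zero.mpr hp.ne') using 2
    ext z
    simp [f]
  refine qscat_eq_of_qscatLE hupper fun m hm hm0 => hf (nullhomotopic_of_qscatLE_zero f ?_)
  rwa [Nat.lt_one_iff.mp hm] at hm0
end

section
/- Let f, g : [0,3] → [0,2] be defined by f(x) = x for 0 ≤ x ≤ 1, f(x) = 1 for 1 ≤ x ≤ 2, f(x) = x − 1 for 2 ≤ x ≤ 3, and g(x) = 2x/3. Then g admits a continuous section, f admits no continuous section, and f and g are homotopic via the linear homotopy (t,x) ↦ t·f(x) + (1−t)·g(x). -/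
open Set Filter Topology

lemma fcont : Continuous (fun x : ℝ => if x ≤ 1 then x else if x ≤ 2 then 1 else x - 1) := by
  apply Continuous.if_le (continuous_id) _ continuous_id continuous_const
  · intro x hx; subst hx; norm_num
  · exact Continuous.if_le continuous_const (by continuity) continuous_id continuous_const
      (by intro x hx; subst hx; norm_num)

lemma fmem {x : ℝ} (hx : x ∈ Icc (0:ℝ) 3) :
    (if x ≤ 1 then x else if x ≤ 2 then 1 else x - 1) ∈ Icc (0:ℝ) 2 := by
  obtain ⟨h0, h3⟩ := hx
  split_ifs with h1 h2 <;> constructor <;> linarith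

lemma seq_lim : Tendsto (fun n : ℕ => 1/((n:ℝ)+1)) atTop (𝓝 0) :=
  tendsto_one_div_add_atTop_nhds_zero_nat

/-- for `f, g : [0,3] → [0,2]` with `f(x) = x` on `[0,1]`, `f(x) = 1` on
`[1,2]`, `f(x) = x - 1` on `[2,3]`, and `g(x) = 2x/3`: `g` admits a continuous section,
`f` admits no continuous section, and `f` and `g` are homotopic via the linear homotopy
`(t,x) ↦ t·f(x) + (1−t)·g(x)`. -/
theorem pavesic_example :
    (∃ s : ℝ → ℝ, ContinuousOn s (Icc 0 2) ∧ MapsTo s (Icc 0 2) (Icc 0 3) ∧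
      ∀ y ∈ Icc (0 : ℝ) 2, 2 * s y / 3 = y) ∧
    (¬ ∃ s : ℝ → ℝ, ContinuousOn s (Icc 0 2) ∧ MapsTo s (Icc 0 2) (Icc 0 3) ∧
      ∀ y ∈ Icc (0 : ℝ) 2,
        (if s y ≤ 1 then s y else if s y ≤ 2 then 1 else s y - 1) = y) ∧
    (ContinuousOn
        (fun q : ℝ × ℝ =>
          q.1 * (if q.2 ≤ 1 then q.2 else if q.2 ≤ 2 then 1 else q.2 - 1) +
            (1 - q.1) * (2 * q.2 / 3))
        (Icc 0 1 ×ˢ Icc 0 3) ∧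
      (∀ t ∈ Icc (0 : ℝ) 1, ∀ x ∈ Icc (0 : ℝ) 3,
        t * (if x ≤ 1 then x else if x ≤ 2 then 1 else x - 1) + (1 - t) * (2 * x / 3)
          ∈ Icc (0 : ℝ) 2) ∧
      (∀ x : ℝ, (0 : ℝ) * (if x ≤ 1 then x else if x ≤ 2 then 1 else x - 1) +
          (1 - 0) * (2 * x / 3) = 2 * x / 3) ∧
      (∀ x : ℝ, (1 : ℝ) * (if x ≤ 1 then x else if x ≤ 2 then 1 else x - 1) +
          (1 - 1) * (2 * x / 3) =
          (if x ≤ 1 then x else if x ≤ 2 then 1 else x - 1))) := by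
  refine ⟨⟨fun y => 3 * y / 2, (show Continuous fun y : ℝ => 3 * y / 2 by fun_prop).continuousOn, ?_, ?_⟩, ?_, ?_, ?_, ?_, ?_⟩
  · intro y ⟨h0, h2⟩; exact ⟨by linarith, by linarith⟩
  · intro y _; ring
  · rintro ⟨s, hc, hm, he⟩
    have hA : ∀ y ∈ Icc (0:ℝ) 2, y < 1 → s y = y := by
      intro y hy hy1
      have h := he y hy
      split_ifs at h with h1 h2
      · exact h
      · linarith
      · push_neg at h2; linarith
    have hB : ∀ y ∈ Icc (0:ℝ) 2, 1 < y → s y = y + 1 := by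
      intro y hy hy1
      have h := he y hy
      split_ifs at h with h1 h2
      · linarith
      · linarith
      · linarith
    set u : ℕ → ℝ := fun n => 1 - ((n:ℝ)+1)⁻¹ with hu
    set v : ℕ → ℝ := fun n => 1 + ((n:ℝ)+1)⁻¹ with hv
    have hpos : ∀ n : ℕ, 0 < ((n:ℝ)+1)⁻¹ := fun n => by positivity
    have hle : ∀ n : ℕ, ((n:ℝ)+1)⁻¹ ≤ 1 := fun n => by
      rw [inv_le_one_iff₀]; right; linarith [Nat.cast_nonneg (α := ℝ) n]
    have humem : ∀ n, u n ∈ Icc (0:ℝ) 2 := fun n =>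
      ⟨by simp only [hu]; linarith [hle n], by simp only [hu]; linarith [hpos n]⟩
    have hvmem : ∀ n, v n ∈ Icc (0:ℝ) 2 := fun n =>
      ⟨by simp only [hv]; linarith [hpos n], by simp only [hv]; linarith [hle n]⟩
    have base : Tendsto (fun n : ℕ => ((n:ℝ)+1)⁻¹) atTop (𝓝 0) := by
      simpa [one_div] using seq_lim
    have hut : Tendsto u atTop (𝓝 1) := by
      have := base.const_sub 1
      simpa only [sub_zero] using this
    have hvt : Tendsto v atTop (𝓝 1) := by
      have := base.const_add 1
      simpa only [add_zero] using this
    have h1mem : (1:ℝ) ∈ Icc (0:ℝ) 2 := by norm_num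
    have hcw := (hc 1 h1mem).tendsto
    have hut' : Tendsto u atTop (𝓝[Icc (0:ℝ) 2] 1) :=
      tendsto_nhdsWithin_iff.2 ⟨hut, Eventually.of_forall humem⟩
    have hvt' : Tendsto v atTop (𝓝[Icc (0:ℝ) 2] 1) :=
      tendsto_nhdsWithin_iff.2 ⟨hvt, Eventually.of_forall hvmem⟩
    have hsu : Tendsto (fun n => s (u n)) atTop (𝓝 (s 1)) := hcw.comp hut'
    have hsv : Tendsto (fun n => s (v n)) atTop (𝓝 (s 1)) := hcw.comp hvt'
    have hsu' : (fun n => s (u n)) = u := by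
      funext n; exact hA (u n) (humem n) (by simp [hu]; linarith [hpos n])
    have hsv' : (fun n => s (v n)) = fun n => v n + 1 := by
      funext n; exact hB (v n) (hvmem n) (by simp [hv]; linarith [hpos n])
    rw [hsu'] at hsu
    rw [hsv'] at hsv
    have h2 : Tendsto (fun n => v n + 1) atTop (𝓝 2) := by
      have := hvt.add_const 1; norm_num at this; exact this
    have e1 : s 1 = 1 := tendsto_nhds_unique hsu hut
    have e2 : s 1 = 2 := tendsto_nhds_unique hsv h2
    linarith
  · exact (Continuous.add (continuous_fst.mul (fcont.comp continuous_snd))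
      (by fun_prop)).continuousOn
  · intro t ⟨ht0, ht1⟩ x hx
    obtain ⟨ha, hb⟩ := fmem hx
    obtain ⟨h0, h3⟩ := hx
    constructor <;> nlinarith
  · intro x; ring
  · intro x; ring
end
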